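/- (Extending a Killing–Stäckel space into a warped product) Let M = B ×_ρ F be a warped product and 𝒦 a Killing–Stäckel space on B (the n_B-dimensional space of simultaneously diagonalized commuting Killing tensors of an orthogonal separable web on B). If some characteristic Killing tensor K ∈ 𝒦 satisfies d(K d(ρ^{-2})) = 0, then every K' ∈ 𝒦 satisfies d(K' d(ρ^{-2})) = 0, and hence every element of 𝒦 extends to a Killing tensor on M. -/

import Mathlib

/-
STATEMENT 16 (Extending a Killing–Stäckel space into a warped product): Let
`M = B ×_ρ F` be a warped product and `𝒦` a Killing–Stäckel space on `B`: a space of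
commuting Killing tensors simultaneously diagonalized in the orthogonal separable
coordinates of a web on `B`.  If some characteristic Killing tensor `K ∈ 𝒦`
satisfies `d(K d(ρ⁻²)) = 0`, then every `K' ∈ 𝒦` satisfies `d(K' d(ρ⁻²)) = 0`, and
hence every element of `𝒦` extends to a Killing tensor on `M`.

Model: `B` is the chart `Fin b → ℝ` with its coordinates the orthogonal separable
coordinates (so the metric `gB` is diagonal and the members of `𝒦` are the Killing
tensors diagonalized in these coordinates); `F` is the chart `Fin f → ℝ` and `M` the
chart `(Fin b ⊕ Fin f) → ℝ` with the warped-product metric.  A characteristic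
Killing tensor is a diagonalized Killing tensor with pointwise simple eigenvalues.
The extension of `K'` is `K' + t G₁` with `dt = K' d(ρ⁻²)`.
-/
noncomputable section

variable {ι : Type} [Fintype ι] [DecidableEq ι]

/-- Partial derivative of a function on the coordinate chart `ι → ℝ`. -/
def pd (i : ι) (f : (ι → ℝ) → ℝ) (x : ι → ℝ) : ℝ :=
  fderiv ℝ f x (Pi.single i 1)

/-- Christoffel symbols `Γ^k_{ij}` of the Levi-Civita connection of a metric `g`
with pointwise inverse `ginv`. -/
def christoffel (g ginv : (ι → ℝ) → Matrix ι ι ℝ) (k i j : ι) (x : ι → ℝ) : ℝ :=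
  (1/2) * ∑ l, ginv x k l *
    (pd i (fun y => g y l j) x + pd j (fun y => g y l i) x - pd l (fun y => g y i j) x)

/-- Covariant derivative `∇_b K^{ij}` of a contravariant 2-tensor field `K`. -/
def covD (g ginv : (ι → ℝ) → Matrix ι ι ℝ) (K : (ι → ℝ) → Matrix ι ι ℝ)
    (b i j : ι) (x : ι → ℝ) : ℝ :=
  pd b (fun y => K y i j) x
    + ∑ l, christoffel g ginv i b l x * K x l j
    + ∑ l, christoffel g ginv j b l x * K x i l

/-- `∇^a K^{ij}`: the covariant derivative with the derivative index raised by `ginv`. -/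
def covDup (g ginv K : (ι → ℝ) → Matrix ι ι ℝ) (a i j : ι) (x : ι → ℝ) : ℝ :=
  ∑ b, ginv x a b * covD g ginv K b i j x

/-- `K` is a Killing tensor (contravariant form): the full symmetrization
`∇^{(a} K^{ij)} = 0`; equivalently `[K,G] = 0` for the Schouten bracket, and
`∇_{(i}K_{jk)} = 0` in covariant components. -/
def IsKillingC (g ginv K : (ι → ℝ) → Matrix ι ι ℝ) : Prop :=
  ∀ a i j x, covDup g ginv K a i j x + covDup g ginv K i j a x + covDup g ginv K j a i x = 0

/-- `K` is a conformal Killing tensor with conformal factor the vector field `t`: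
`∇^{(a} K^{ij)} = t^{(a} G^{ij)}`; equivalently `[K,G] = -2 t ⊙ G`. -/
def IsConformalKillingC (g ginv K : (ι → ℝ) → Matrix ι ι ℝ) (t : (ι → ℝ) → ι → ℝ) : Prop :=
  ∀ a i j x, covDup g ginv K a i j x + covDup g ginv K i j a x + covDup g ginv K j a i x
    = t x a * ginv x i j + t x i * ginv x j a + t x j * ginv x a i

/-- `L` is a concircular tensor with associated vector field `α`:
`∇_b L = α ⊙ ∂_b` in contravariant components. -/
def IsConcircularC (g ginv L : (ι → ℝ) → Matrix ι ι ℝ) (α : (ι → ℝ) → ι → ℝ) : Prop :=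
  ∀ b i j x, covD g ginv L b i j x
    = (α x i * (if b = j then (1:ℝ) else 0) + (if b = i then (1:ℝ) else 0) * α x j) / 2

/-- The metric trace `tr L = g_{ij} L^{ij}` of a contravariant 2-tensor `L`. -/
def trC (g L : (ι → ℝ) → Matrix ι ι ℝ) (x : ι → ℝ) : ℝ :=
  ∑ i, ∑ j, g x i j * L x i j

variable {b f : ℕ}

/-- Points of the warped product chart `B × F`. -/
abbrev PtM (b f : ℕ) := (Fin b ⊕ Fin f) → ℝ

/-- The covariant warped product metric `g = g_B + ρ² g_F` on the chart of `B ×_ρ F`. -/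
def warpMetric (gB : (Fin b → ℝ) → Matrix (Fin b) (Fin b) ℝ)
    (gF : (Fin f → ℝ) → Matrix (Fin f) (Fin f) ℝ) (ρ : (Fin b → ℝ) → ℝ) :
    PtM b f → Matrix (Fin b ⊕ Fin f) (Fin b ⊕ Fin f) ℝ :=
  fun x => Matrix.of fun i j =>
    match i, j with
    | Sum.inl a, Sum.inl a' => gB (x ∘ Sum.inl) a a'
    | Sum.inr α, Sum.inr β => (ρ (x ∘ Sum.inl))^2 * gF (x ∘ Sum.inr) α β
    | _, _ => 0

/-- The contravariant warped product metric `G = G₀ + κ G₁`, `κ = ρ⁻²`. -/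
def warpMetricInv (gBinv : (Fin b → ℝ) → Matrix (Fin b) (Fin b) ℝ)
    (gFinv : (Fin f → ℝ) → Matrix (Fin f) (Fin f) ℝ) (ρ : (Fin b → ℝ) → ℝ) :
    PtM b f → Matrix (Fin b ⊕ Fin f) (Fin b ⊕ Fin f) ℝ :=
  fun x => Matrix.of fun i j =>
    match i, j with
    | Sum.inl a, Sum.inl a' => gBinv (x ∘ Sum.inl) a a'
    | Sum.inr α, Sum.inr β => ((ρ (x ∘ Sum.inl))^2)⁻¹ * gFinv (x ∘ Sum.inr) α β
    | _, _ => 0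

/-- Lift of a contravariant 2-tensor from `B` to the product chart. -/
def liftB (K : (Fin b → ℝ) → Matrix (Fin b) (Fin b) ℝ) :
    PtM b f → Matrix (Fin b ⊕ Fin f) (Fin b ⊕ Fin f) ℝ :=
  fun x => Matrix.of fun i j =>
    match i, j with
    | Sum.inl a, Sum.inl a' => K (x ∘ Sum.inl) a a'
    | _, _ => 0

/-- Lift of a contravariant 2-tensor from `F` to the product chart. -/
def liftF (K : (Fin f → ℝ) → Matrix (Fin f) (Fin f) ℝ) :
    PtM b f → Matrix (Fin b ⊕ Fin f) (Fin b ⊕ Fin f) ℝ :=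
  fun x => Matrix.of fun i j =>
    match i, j with
    | Sum.inr α, Sum.inr β => K (x ∘ Sum.inr) α β
    | _, _ => 0

/-- The lifted contravariant fibre metric `G₁` of the warped product. -/
def liftG1 (gFinv : (Fin f → ℝ) → Matrix (Fin f) (Fin f) ℝ) :
    PtM b f → Matrix (Fin b ⊕ Fin f) (Fin b ⊕ Fin f) ℝ :=
  liftF gFinv

/-- The 1-form `K'(dκ)` on `B` (indices lowered with `gB`):
`θ_a = g_{ac} K'^{cb} ∂_b κ`. -/
def Kdkappa (gB K : (Fin b → ℝ) → Matrix (Fin b) (Fin b) ℝ) (κ : (Fin b → ℝ) → ℝ)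
    (y : Fin b → ℝ) (a : Fin b) : ℝ :=
  ∑ c, ∑ d, gB y a c * K y c d * pd d κ y

section PD
variable {ι : Type} [Fintype ι] [DecidableEq ι]

lemma pd_congr {f g : (ι → ℝ) → ℝ} (h : ∀ x, f x = g x) (i : ι) (x : ι → ℝ) :
    pd i f x = pd i g x := by
  have : f = g := funext h
  rw [pd, pd, this]

lemma pd_const (c : ℝ) (i : ι) (x : ι → ℝ) : pd i (fun _ => c) x = 0 := by
  simp [pd]

lemma pd_zero_fun {f : (ι → ℝ) → ℝ} (h : ∀ x, f x = 0) (i : ι) (x : ι → ℝ) :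
    pd i f x = 0 := by rw [pd_congr h]; exact pd_const 0 i x

lemma pd_add {f g : (ι → ℝ) → ℝ} (hf : DifferentiableAt ℝ f x) (hg : DifferentiableAt ℝ g x)
    (i : ι) : pd i (fun y => f y + g y) x = pd i f x + pd i g x := by
  simp [pd, fderiv_fun_add hf hg]

lemma pd_mul {x : ι → ℝ} {f g : (ι → ℝ) → ℝ} (hf : DifferentiableAt ℝ f x)
    (hg : DifferentiableAt ℝ g x) (i : ι) :
    pd i (fun y => f y * g y) x = pd i f x * g x + f x * pd i g x := by
  simp [pd, fderiv_fun_mul hf hg]; ring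

lemma pd_smul {x : ι → ℝ} {f : (ι → ℝ) → ℝ} (c : ℝ) (hf : DifferentiableAt ℝ f x) (i : ι) :
    pd i (fun y => c * f y) x = c * pd i f x := by
  simp [pd, fderiv_const_mul hf]

lemma pd_sum {x : ι → ℝ} {s : Finset ι} {f : ι → (ι → ℝ) → ℝ}
    (hf : ∀ j ∈ s, DifferentiableAt ℝ (f j) x) (i : ι) :
    pd i (fun y => ∑ j ∈ s, f j y) x = ∑ j ∈ s, pd i (f j) x := by
  classical
  induction s using Finset.cons_induction with
  | empty => simp [pd]
  | cons a s ha ih =>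
    rw [Finset.sum_cons]
    rw [pd_congr (fun y => (Finset.sum_cons (f := fun j => f j y) ha))]
    rw [pd_add (hf a (Finset.mem_cons_self a s))
      (DifferentiableAt.fun_sum (fun j hj => hf j (Finset.mem_cons_of_mem hj)))]
    rw [ih (fun j hj => hf j (Finset.mem_cons_of_mem hj))]

lemma contDiff_pd {f : (ι → ℝ) → ℝ} (hf : ContDiff ℝ (⊤ : ℕ∞) f) (i : ι) :
    ContDiff ℝ (⊤ : ℕ∞) (pd i f) := by
  have h1 : ContDiff ℝ (⊤ : ℕ∞) (fderiv ℝ f) := hf.fderiv_right (by simp)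
  exact h1.clm_apply contDiff_const

lemma pd_hasFDerivAt {f : (ι → ℝ) → ℝ} {x : ι → ℝ} (hf : DifferentiableAt ℝ f x) (i : ι) :
    pd i f x = fderiv ℝ f x (Pi.single i 1) := rfl

lemma hasFDerivAt_pd {f : (ι → ℝ) → ℝ} {x : ι → ℝ} {L : (ι → ℝ) →L[ℝ] ℝ}
    (hf : HasFDerivAt f L x) (i : ι) : pd i f x = L (Pi.single i 1) := by
  rw [pd, hf.fderiv]

/-- Schwarz symmetry of second partials for C² functions. -/
lemma pd_comm {f : (ι → ℝ) → ℝ} (hf : ContDiff ℝ (⊤ : ℕ∞) f) (i j : ι) (x : ι → ℝ) :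
    pd i (pd j f) x = pd j (pd i f) x := by
  have hdiff : ∀ y, HasFDerivAt f (fderiv ℝ f y) y :=
    fun y => (hf.differentiable (by simp) y).hasFDerivAt
  have h1 : ContDiff ℝ (⊤ : ℕ∞) (fderiv ℝ f) := hf.fderiv_right (by simp)
  have h2 : HasFDerivAt (fderiv ℝ f) (fderiv ℝ (fderiv ℝ f) x) x :=
    ((h1.differentiable (by simp)) x).hasFDerivAt
  have hsymm := second_derivative_symmetric hdiff h2 (Pi.single i 1) (Pi.single j 1)
  have e : ∀ (k l : ι), pd k (pd l f) x
      = (fderiv ℝ (fderiv ℝ f) x (Pi.single k 1)) (Pi.single l 1) := by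
    intro k l
    have : pd l f = fun y => (fderiv ℝ f y) (Pi.single l 1) := rfl
    rw [pd, this]
    rw [fderiv_clm_apply ((h1.differentiable (by simp)) x) (differentiableAt_const _)]
    simp
  rw [e i j, e j i, hsymm]

end PD

section DiagBase
variable {ι : Type} [Fintype ι] [DecidableEq ι]
variable {g ginv K : (ι → ℝ) → Matrix ι ι ℝ}

lemma diag_entry_ne (hinv : ∀ y, g y * ginv y = 1) (hdiag : ∀ y a a', a ≠ a' → g y a a' = 0)
    (y : ι → ℝ) (a : ι) : g y a a ≠ 0 := by
  have h := congrArg (fun M => M a a) (hinv y)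
  simp only [Matrix.mul_apply, Matrix.one_apply_eq] at h
  rw [Finset.sum_eq_single a (fun c _ hc => by rw [hdiag y a c (Ne.symm hc), zero_mul])
    (by simp)] at h
  intro h0; rw [h0, zero_mul] at h; exact one_ne_zero h.symm

lemma ginv_diag (hinv : ∀ y, g y * ginv y = 1) (hdiag : ∀ y a a', a ≠ a' → g y a a' = 0)
    (y : ι → ℝ) (a a' : ι) : ginv y a a' = if a = a' then (g y a a)⁻¹ else 0 := by
  have h := congrArg (fun M => M a a') (hinv y)
  simp only [Matrix.mul_apply, Matrix.one_apply] at h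
  rw [Finset.sum_eq_single a (fun c _ hc => by rw [hdiag y a c (Ne.symm hc), zero_mul])
    (by simp)] at h
  have hne := diag_entry_ne hinv hdiag y a
  by_cases hc : a = a'
  · subst hc
    rw [if_pos rfl] at h
    rw [if_pos rfl]
    exact (inv_eq_of_mul_eq_one_right h).symm
  · simp only [hc, if_false] at h ⊢
    exact (mul_eq_zero.mp h).resolve_left hne

lemma christoffel_diag (hinv : ∀ y, g y * ginv y = 1)
    (hdiag : ∀ y a a', a ≠ a' → g y a a' = 0) (k i j : ι) (y : ι → ℝ) :
    christoffel g ginv k i j y = (1/2) * (g y k k)⁻¹ *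
      ((if k = j then pd i (fun z => g z k k) y else 0)
        + (if k = i then pd j (fun z => g z k k) y else 0)
        - (if i = j then pd k (fun z => g z i i) y else 0)) := by
  rw [christoffel]
  rw [Finset.sum_eq_single k
    (fun c _ hc => by rw [ginv_diag hinv hdiag, if_neg (Ne.symm hc), zero_mul])
    (by simp)]
  rw [ginv_diag hinv hdiag, if_pos rfl]
  have e1 : pd i (fun z => g z k j) y = if k = j then pd i (fun z => g z k k) y else 0 := by
    by_cases h : k = j
    · subst h; simp
    · rw [if_neg h]; exact pd_zero_fun (fun z => hdiag z k j h) i y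
  have e2 : pd j (fun z => g z k i) y = if k = i then pd j (fun z => g z k k) y else 0 := by
    by_cases h : k = i
    · subst h; simp
    · rw [if_neg h]; exact pd_zero_fun (fun z => hdiag z k i h) j y
  have e3 : pd k (fun z => g z i j) y = if i = j then pd k (fun z => g z i i) y else 0 := by
    by_cases h : i = j
    · subst h; simp
    · rw [if_neg h]; exact pd_zero_fun (fun z => hdiag z i j h) k y
  rw [e1, e2, e3]; ring

lemma covD_diag (hKdiag : ∀ y a a', a ≠ a' → K y a a' = 0) (b i j : ι) (y : ι → ℝ) :
    covD g ginv K b i j y = pd b (fun z => K z i j) y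
      + christoffel g ginv i b j y * K y j j + christoffel g ginv j b i y * K y i i := by
  rw [covD]
  rw [Finset.sum_eq_single j (fun c _ hc => by rw [hKdiag y c j hc, mul_zero]) (by simp)]
  rw [Finset.sum_eq_single i (fun c _ hc => by rw [hKdiag y i c (Ne.symm hc), mul_zero])
    (by simp)]

lemma covDup_diag (hinv : ∀ y, g y * ginv y = 1) (hdiag : ∀ y a a', a ≠ a' → g y a a' = 0)
    (a i j : ι) (y : ι → ℝ) :
    covDup g ginv K a i j y = (g y a a)⁻¹ * covD g ginv K a i j y := by
  rw [covDup]
  rw [Finset.sum_eq_single a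
    (fun c _ hc => by rw [ginv_diag hinv hdiag, if_neg (Ne.symm hc), zero_mul])
    (by simp)]
  rw [ginv_diag hinv hdiag, if_pos rfl]

/-- The key consequence of the Killing equation for a diagonal tensor in
orthogonal coordinates: `∂_a K^{ii} = - g_aa (g_ii)⁻² ∂_a g_ii K^{aa}` for `a ≠ i`. -/
lemma killing_offdiag (hinv : ∀ y, g y * ginv y = 1)
    (hdiag : ∀ y a a', a ≠ a' → g y a a' = 0)
    (hKdiag : ∀ y a a', a ≠ a' → K y a a' = 0)
    (hK : IsKillingC g ginv K) {a i : ι} (hai : a ≠ i) (y : ι → ℝ) :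
    pd a (fun z => K z i i) y
      = -(g y a a) * ((g y i i)⁻¹)^2 * pd a (fun z => g z i i) y * K y a a := by
  have hC := hK a i i y
  rw [covDup_diag hinv hdiag, covDup_diag hinv hdiag, covDup_diag hinv hdiag] at hC
  rw [covD_diag hKdiag, covD_diag hKdiag, covD_diag hKdiag] at hC
  simp only [christoffel_diag hinv hdiag] at hC
  have hKai : ∀ z, K z i a = 0 := fun z => hKdiag z i a (Ne.symm hai)
  have hKia : ∀ z, K z a i = 0 := fun z => hKdiag z a i hai
  rw [pd_zero_fun hKai i y, pd_zero_fun hKia i y] at hC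
  simp only [if_pos rfl, if_neg hai, if_neg (Ne.symm hai), eq_self_iff_true, if_true] at hC
  have hga := diag_entry_ne hinv hdiag y a
  have hgi := diag_entry_ne hinv hdiag y i
  have h2 : (g y a a)⁻¹ * pd a (fun z => K z i i) y
      + ((g y i i)⁻¹)^2 * pd a (fun z => g z i i) y * K y a a = 0 := by
    linear_combination hC
  field_simp at h2 ⊢
  linear_combination h2
end DiagBase

section Eigen
variable {ι : Type} [Fintype ι] [DecidableEq ι]
variable {g ginv K : (ι → ℝ) → Matrix ι ι ℝ}

lemma eigen_deriv (hg : ∀ i j, ContDiff ℝ (⊤ : ℕ∞) (fun y => g y i j))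
    (hKs : ∀ i j, ContDiff ℝ (⊤ : ℕ∞) (fun y => K y i j))
    (hinv : ∀ y, g y * ginv y = 1) (hdiag : ∀ y a a', a ≠ a' → g y a a' = 0)
    (hKdiag : ∀ y a a', a ≠ a' → K y a a' = 0) (hK : IsKillingC g ginv K)
    {a i : ι} (hai : a ≠ i) (y : ι → ℝ) :
    pd a (fun z => K z i i * g z i i) y
      = (K y i i * g y i i - K y a a * g y a a) * (g y i i)⁻¹
          * pd a (fun z => g z i i) y := by
  rw [pd_mul ((hKs i i).differentiable (by simp) y) ((hg i i).differentiable (by simp) y)]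
  rw [killing_offdiag hinv hdiag hKdiag hK hai]
  have hga := diag_entry_ne hinv hdiag y a
  have hgi := diag_entry_ne hinv hdiag y i
  field_simp
  ring

lemma theta_diff (hg : ∀ i j, ContDiff ℝ (⊤ : ℕ∞) (fun y => g y i j))
    (hKs : ∀ i j, ContDiff ℝ (⊤ : ℕ∞) (fun y => K y i j))
    (hinv : ∀ y, g y * ginv y = 1) (hdiag : ∀ y a a', a ≠ a' → g y a a' = 0)
    (hKdiag : ∀ y a a', a ≠ a' → K y a a' = 0) (hK : IsKillingC g ginv K)
    {κ : (ι → ℝ) → ℝ} (hκ : ContDiff ℝ (⊤ : ℕ∞) κ)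
    {a a' : ι} (hai : a ≠ a') (y : ι → ℝ) :
    pd a (fun z => K z a' a' * g z a' a' * pd a' κ z) y
      - pd a' (fun z => K z a a * g z a a * pd a κ z) y
    = (K y a' a' * g y a' a' - K y a a * g y a a) *
        (pd a (pd a' κ) y
          + (g y a' a')⁻¹ * pd a (fun z => g z a' a') y * pd a' κ y
          + (g y a a)⁻¹ * pd a' (fun z => g z a a) y * pd a κ y) := by
  have d1 : DifferentiableAt ℝ (fun z => K z a' a' * g z a' a') y :=
    (((hKs a' a').mul (hg a' a')).differentiable (by simp)) y
  have d2 : DifferentiableAt ℝ (fun z => K z a a * g z a a) y :=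
    (((hKs a a).mul (hg a a)).differentiable (by simp)) y
  rw [pd_mul d1 ((contDiff_pd hκ a').differentiable (by simp) y) a]
  rw [pd_mul d2 ((contDiff_pd hκ a).differentiable (by simp) y) a']
  rw [eigen_deriv hg hKs hinv hdiag hKdiag hK hai y,
      eigen_deriv hg hKs hinv hdiag hKdiag hK (Ne.symm hai) y]
  rw [pd_comm hκ a' a y]
  ring
end Eigen

section Part1
variable {b f : ℕ}

lemma Kdkappa_diag {gB K : (Fin b → ℝ) → Matrix (Fin b) (Fin b) ℝ}
    (hdiag : ∀ y a a', a ≠ a' → gB y a a' = 0)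
    (hKdiag : ∀ y a a', a ≠ a' → K y a a' = 0) (κ : (Fin b → ℝ) → ℝ)
    (y : Fin b → ℝ) (a : Fin b) :
    Kdkappa gB K κ y a = K y a a * gB y a a * pd a κ y := by
  rw [Kdkappa]
  rw [Finset.sum_eq_single a
    (fun c _ hc => by
      simp only [hdiag y a c (Ne.symm hc), zero_mul]
      exact Finset.sum_eq_zero (fun d _ => by ring))
    (by simp)]
  rw [Finset.sum_eq_single a
    (fun d _ hd => by rw [hKdiag y a d (Ne.symm hd), mul_zero, zero_mul]) (by simp)]
  ring

lemma part1 (gB gBinv : (Fin b → ℝ) → Matrix (Fin b) (Fin b) ℝ)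
    (ρ : (Fin b → ℝ) → ℝ)
    (hgB : ∀ i j, ContDiff ℝ (⊤ : ℕ∞) (fun y => gB y i j))
    (hgBdiag : ∀ y a a', a ≠ a' → gB y a a' = 0)
    (hgBinv : ∀ y, gB y * gBinv y = 1)
    (hρ : ContDiff ℝ (⊤ : ℕ∞) ρ) (hρpos : ∀ y, 0 < ρ y)
    (K : (Fin b → ℝ) → Matrix (Fin b) (Fin b) ℝ)
    (hKs : ∀ i j, ContDiff ℝ (⊤ : ℕ∞) (fun y => K y i j))
    (hKdiag : ∀ y a a', a ≠ a' → K y a a' = 0)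
    (hKKilling : IsKillingC gB gBinv K)
    (hKchar : ∀ y a a', a ≠ a' → K y a a * gB y a a ≠ K y a' a' * gB y a' a')
    (hKclosed : ∀ a a' y,
      pd a (fun z => Kdkappa gB K (fun w => ((ρ w)^2)⁻¹) z a') y
        = pd a' (fun z => Kdkappa gB K (fun w => ((ρ w)^2)⁻¹) z a) y)
    (K' : (Fin b → ℝ) → Matrix (Fin b) (Fin b) ℝ)
    (hK's : ∀ i j, ContDiff ℝ (⊤ : ℕ∞) (fun y => K' y i j))
    (hK'diag : ∀ y a a', a ≠ a' → K' y a a' = 0)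
    (hK'Killing : IsKillingC gB gBinv K') :
    ∀ a a' y,
      pd a (fun z => Kdkappa gB K' (fun w => ((ρ w)^2)⁻¹) z a') y
        = pd a' (fun z => Kdkappa gB K' (fun w => ((ρ w)^2)⁻¹) z a) y := by
  set κ : (Fin b → ℝ) → ℝ := fun w => ((ρ w)^2)⁻¹ with hκdef
  have hκ : ContDiff ℝ (⊤ : ℕ∞) κ :=
    (hρ.pow 2).inv (fun w => pow_ne_zero 2 (hρpos w).ne')
  intro a a' y
  by_cases haa : a = a'
  · subst haa; rfl
  · have hrwK' : ∀ (c c' : Fin b) (z : Fin b → ℝ),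
        pd c (fun w => Kdkappa gB K' κ w c') z
          = pd c (fun w => K' w c' c' * gB w c' c' * pd c' κ w) z := by
      intro c c' z
      exact pd_congr (fun w => Kdkappa_diag hgBdiag hK'diag κ w c') c z
    have hrwK : ∀ (c c' : Fin b) (z : Fin b → ℝ),
        pd c (fun w => Kdkappa gB K κ w c') z
          = pd c (fun w => K w c' c' * gB w c' c' * pd c' κ w) z := by
      intro c c' z
      exact pd_congr (fun w => Kdkappa_diag hgBdiag hKdiag κ w c') c z
    have hKd := theta_diff hgB hKs hgBinv hgBdiag hKdiag hKKilling hκ haa y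
    have hclosed := hKclosed a a' y
    rw [hrwK a a' y, hrwK a' a y] at hclosed
    rw [hclosed, sub_self] at hKd
    have hfac : K y a' a' * gB y a' a' - K y a a * gB y a a ≠ 0 :=
      sub_ne_zero.mpr (Ne.symm (hKchar y a a' haa))
    have hR := (mul_eq_zero.mp hKd.symm).resolve_left hfac
    have hK'd := theta_diff hgB hK's hgBinv hgBdiag hK'diag hK'Killing hκ haa y
    rw [hR, mul_zero] at hK'd
    rw [hrwK' a a' y, hrwK' a' a y]
    linarith [hK'd]
end Part1

section Poincare
variable {n : ℕ}

private def pDθ (θ : (Fin n → ℝ) → Fin n → ℝ) (c : Fin n) (x : Fin n → ℝ) :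
    (Fin n → ℝ) →L[ℝ] ℝ := fderiv ℝ (fun z => θ z c) x

private def pF (θ : (Fin n → ℝ) → Fin n → ℝ) (x : Fin n → ℝ) (s : ℝ) : ℝ :=
  ∑ c, x c * θ (s • x) c

private def pΦ (θ : (Fin n → ℝ) → Fin n → ℝ) (s : ℝ) (x : Fin n → ℝ) :
    (Fin n → ℝ) →L[ℝ] ℝ :=
  ∑ c, ((x c) • ((pDθ θ c (s • x)).comp (s • ContinuousLinearMap.id ℝ (Fin n → ℝ)))
      + (θ (s • x) c) • (ContinuousLinearMap.proj c : (Fin n → ℝ) →L[ℝ] ℝ))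

private def pt (θ : (Fin n → ℝ) → Fin n → ℝ) (x : Fin n → ℝ) : ℝ :=
  ∫ s in (0:ℝ)..1, pF θ x s

lemma poincare (θ : (Fin n → ℝ) → Fin n → ℝ)
    (hθ : ∀ c, ContDiff ℝ (⊤ : ℕ∞) (fun y => θ y c))
    (hclosed : ∀ a c y, pd a (fun z => θ z c) y = pd c (fun z => θ z a) y) :
    ∃ t : (Fin n → ℝ) → ℝ, (∀ y, DifferentiableAt ℝ t y) ∧ (∀ a y, pd a t y = θ y a) := by
  classical
  have hDθcont : ∀ c, Continuous (pDθ θ c) := fun c => ((hθ c).fderiv_right (m := (⊤ : ℕ∞)) (by simp)).continuous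
  have hθcont : ∀ c, Continuous fun y => θ y c := fun c => (hθ c).continuous
  -- derivative of F in x
  have hFder : ∀ (s : ℝ) (x : Fin n → ℝ), HasFDerivAt (fun x => pF θ x s) (pΦ θ s x) x := by
    intro s x
    apply HasFDerivAt.fun_sum
    intro c _
    have h1 : HasFDerivAt (fun x : Fin n → ℝ => x c)
        (ContinuousLinearMap.proj c : (Fin n → ℝ) →L[ℝ] ℝ) x :=
      (ContinuousLinearMap.proj c : (Fin n → ℝ) →L[ℝ] ℝ).hasFDerivAt
    have hin : HasFDerivAt (fun x : Fin n → ℝ => s • x)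
        (s • ContinuousLinearMap.id ℝ (Fin n → ℝ)) x := by
      simpa using (s • ContinuousLinearMap.id ℝ (Fin n → ℝ)).hasFDerivAt
    have hout : HasFDerivAt (fun z => θ z c) (pDθ θ c (s • x)) (s • x) :=
      (((hθ c).differentiable (by simp)) (s • x)).hasFDerivAt
    have h2 : HasFDerivAt (fun x : Fin n → ℝ => θ (s • x) c)
        ((pDθ θ c (s • x)).comp (s • ContinuousLinearMap.id ℝ (Fin n → ℝ))) x :=
      HasFDerivAt.comp x hout hin
    exact h1.mul h2
  -- joint continuity of Φ
  have hΦcont : Continuous (fun p : ℝ × (Fin n → ℝ) => pΦ θ p.1 p.2) := by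
    apply continuous_finset_sum
    intro c _
    apply Continuous.add
    · apply Continuous.fun_smul
      · exact (continuous_apply c).comp continuous_snd
      · apply Continuous.clm_comp
        · exact (hDθcont c).comp (continuous_fst.smul continuous_snd)
        · exact continuous_fst.smul continuous_const
    · apply Continuous.fun_smul
      · exact (hθcont c).comp (continuous_fst.smul continuous_snd)
      · exact continuous_const
  have hFcont : Continuous (fun p : ℝ × (Fin n → ℝ) => pF θ p.2 p.1) := by
    apply continuous_finset_sum
    intro c _
    exact ((continuous_apply c).comp continuous_snd).mul
      ((hθcont c).comp (continuous_fst.smul continuous_snd))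
  -- main derivative computation
  have hmain : ∀ y₀ : Fin n → ℝ,
      IntervalIntegrable (fun s => pΦ θ s y₀) MeasureTheory.volume 0 1 ∧
      HasFDerivAt (pt θ) (∫ s in (0:ℝ)..1, pΦ θ s y₀) y₀ := by
    intro y₀
    obtain ⟨C, hC⟩ := ((isCompact_Icc (a := (0:ℝ)) (b := 1)).prod
      (isCompact_closedBall y₀ 1)).exists_bound_of_continuousOn hΦcont.continuousOn
    apply intervalIntegral.hasFDerivAt_integral_of_dominated_loc_of_lip
      (F := pF θ) (F' := fun s => pΦ θ s y₀) (bound := fun _ => C) (Metric.ball_mem_nhds y₀ one_pos)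
    · filter_upwards with x
      exact (hFcont.comp (continuous_id.prodMk continuous_const)).aestronglyMeasurable
    · exact (hFcont.comp (continuous_id.prodMk continuous_const)).intervalIntegrable 0 1
    · exact (hΦcont.comp (continuous_id.prodMk continuous_const)).aestronglyMeasurable
    · filter_upwards with s hs
      have hsIcc : s ∈ Set.Icc (0:ℝ) 1 :=
        Set.Ioc_subset_Icc_self (by rwa [Set.uIoc_of_le zero_le_one] at hs)
      apply (convex_ball y₀ 1).lipschitzOnWith_of_nnnorm_hasFDerivWithin_le
        (f' := fun x => pΦ θ s x)
        (fun x _ => (hFder s x).hasFDerivWithinAt)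
      intro x hx
      have hmem : (s, x) ∈ (Set.Icc (0:ℝ) 1) ×ˢ Metric.closedBall y₀ 1 :=
        ⟨hsIcc, Metric.ball_subset_closedBall hx⟩
      have := hC (s, x) hmem
      rw [← NNReal.coe_le_coe]
      simp only [coe_nnnorm, Real.coe_nnabs]
      exact this.trans (le_abs_self C)
    · exact intervalIntegrable_const
    · filter_upwards with s _
      exact hFder s y₀
  refine ⟨pt θ, fun y => (hmain y).2.differentiableAt, fun a y₀ => ?_⟩
  obtain ⟨hint, hder⟩ := hmain y₀
  rw [pd, hder.fderiv]
  rw [ContinuousLinearMap.intervalIntegral_apply hint (Pi.single a 1)]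
  have hDsymm : ∀ (c : Fin n) (z : Fin n → ℝ),
      pDθ θ c z (Pi.single a 1) = pDθ θ a z (Pi.single c 1) := fun c z => hclosed a c z
  have hy₀ : (∑ c, y₀ c • (Pi.single c (1:ℝ) : Fin n → ℝ)) = y₀ := by
    ext j
    simp [Pi.single_apply]
  have hval : ∀ s : ℝ, (pΦ θ s y₀) (Pi.single a 1)
      = θ (s • y₀) a + s * (pDθ θ a (s • y₀) y₀) := by
    intro s
    rw [pΦ]
    simp only [ContinuousLinearMap.sum_apply, ContinuousLinearMap.add_apply,
      ContinuousLinearMap.smul_apply, ContinuousLinearMap.coe_comp', Function.comp_apply,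
      ContinuousLinearMap.coe_smul', Pi.smul_apply, ContinuousLinearMap.coe_id', id_eq,
      ContinuousLinearMap.proj_apply]
    rw [Finset.sum_add_distrib]
    have e1 : ∑ c, θ (s • y₀) c • (Pi.single a (1:ℝ) : Fin n → ℝ) c = θ (s • y₀) a := by
      simp [Pi.single_apply]
    have e2 : ∑ c, y₀ c • (pDθ θ c (s • y₀)) (s • (Pi.single a 1 : Fin n → ℝ))
        = s * (pDθ θ a (s • y₀) y₀) := by
      have key : ∀ c, y₀ c • (pDθ θ c (s • y₀)) (s • (Pi.single a 1 : Fin n → ℝ))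
          = s * (y₀ c • (pDθ θ a (s • y₀)) (Pi.single c 1)) := by
        intro c
        rw [map_smul, hDsymm c (s • y₀)]
        simp only [smul_eq_mul]
        ring
      rw [Finset.sum_congr rfl (fun c _ => key c), ← Finset.mul_sum]
      congr 1
      have e3 : ∑ c, y₀ c • (pDθ θ a (s • y₀)) (Pi.single c 1)
          = (pDθ θ a (s • y₀)) (∑ c, y₀ c • (Pi.single c (1:ℝ) : Fin n → ℝ)) := by
        rw [map_sum]
        exact Finset.sum_congr rfl (fun c _ => by rw [map_smul])
      rw [e3, hy₀]
    rw [e1, e2]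
    ring
  have hφder : ∀ s : ℝ, HasDerivAt (fun u : ℝ => u * θ (u • y₀) a)
      (θ (s • y₀) a + s * (pDθ θ a (s • y₀) y₀)) s := by
    intro s
    have hsm : HasDerivAt (fun u : ℝ => u • y₀) y₀ s := by
      simpa using (hasDerivAt_id s).smul_const y₀
    have hcomp : HasDerivAt (fun u : ℝ => θ (u • y₀) a) (pDθ θ a (s • y₀) y₀) s :=
      (HasFDerivAt.comp_hasDerivAt s (((hθ a).differentiable (by simp)) (s • y₀)).hasFDerivAt hsm :)
    have := (hasDerivAt_id s).fun_mul hcomp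
    simpa using this
  have hcont : Continuous fun s : ℝ => θ (s • y₀) a + s * (pDθ θ a (s • y₀) y₀) := by
    apply Continuous.add
    · exact (hθcont a).comp (continuous_id.smul continuous_const)
    · exact continuous_id.mul (((hDθcont a).comp
        (continuous_id.smul continuous_const)).clm_apply continuous_const)
  have heq : (∫ s in (0:ℝ)..1, (pΦ θ s y₀) (Pi.single a 1))
      = ∫ s in (0:ℝ)..1, (θ (s • y₀) a + s * (pDθ θ a (s • y₀) y₀)) := by
    congr 1
    ext s
    exact hval s
  rw [heq]
  rw [intervalIntegral.integral_eq_sub_of_hasDerivAt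
    (fun s _ => hφder s) (hcont.intervalIntegrable 0 1)]
  simp
end Poincare

section Warp
variable {b f : ℕ}

def inlCLM (b f : ℕ) : (PtM b f) →L[ℝ] (Fin b → ℝ) :=
  ContinuousLinearMap.pi (fun a => ContinuousLinearMap.proj (Sum.inl a))

def inrCLM (b f : ℕ) : (PtM b f) →L[ℝ] (Fin f → ℝ) :=
  ContinuousLinearMap.pi (fun α => ContinuousLinearMap.proj (Sum.inr α))

lemma diff_comp_inl {h : (Fin b → ℝ) → ℝ} {x : PtM b f}
    (hd : DifferentiableAt ℝ h (x ∘ Sum.inl)) :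
    DifferentiableAt ℝ (fun x : PtM b f => h (x ∘ Sum.inl)) x :=
  hd.comp x (inlCLM b f).differentiableAt

lemma diff_comp_inr {h : (Fin f → ℝ) → ℝ} {x : PtM b f}
    (hd : DifferentiableAt ℝ h (x ∘ Sum.inr)) :
    DifferentiableAt ℝ (fun x : PtM b f => h (x ∘ Sum.inr)) x :=
  hd.comp x (inrCLM b f).differentiableAt

lemma pd_comp_inl_inl {h : (Fin b → ℝ) → ℝ} {x : PtM b f}
    (hd : DifferentiableAt ℝ h (x ∘ Sum.inl)) (a : Fin b) :
    pd (Sum.inl a : Fin b ⊕ Fin f) (fun x => h (x ∘ Sum.inl)) x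
      = pd a h (x ∘ Sum.inl) := by
  have e : (fun x : PtM b f => h (x ∘ Sum.inl)) = h ∘ (inlCLM b f) := rfl
  rw [pd, e, fderiv_comp x hd (inlCLM b f).differentiableAt,
    (inlCLM b f).fderiv]
  have e2 : (inlCLM b f) (Pi.single (Sum.inl a) 1) = Pi.single a 1 := by
    ext c
    simp [inlCLM, Pi.single_apply]
  simp only [ContinuousLinearMap.coe_comp', Function.comp_apply, e2]
  rfl

lemma pd_comp_inl_inr {h : (Fin b → ℝ) → ℝ} {x : PtM b f}
    (hd : DifferentiableAt ℝ h (x ∘ Sum.inl)) (α : Fin f) :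
    pd (Sum.inr α : Fin b ⊕ Fin f) (fun x => h (x ∘ Sum.inl)) x = 0 := by
  have e : (fun x : PtM b f => h (x ∘ Sum.inl)) = h ∘ (inlCLM b f) := rfl
  rw [pd, e, fderiv_comp x hd (inlCLM b f).differentiableAt,
    (inlCLM b f).fderiv]
  have e2 : (inlCLM b f) (Pi.single (Sum.inr α) 1) = 0 := by
    ext c
    simp [inlCLM, Pi.single_apply]
  simp only [ContinuousLinearMap.coe_comp', Function.comp_apply, e2, map_zero]

lemma pd_comp_inr_inr {h : (Fin f → ℝ) → ℝ} {x : PtM b f}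
    (hd : DifferentiableAt ℝ h (x ∘ Sum.inr)) (α : Fin f) :
    pd (Sum.inr α : Fin b ⊕ Fin f) (fun x => h (x ∘ Sum.inr)) x
      = pd α h (x ∘ Sum.inr) := by
  have e : (fun x : PtM b f => h (x ∘ Sum.inr)) = h ∘ (inrCLM b f) := rfl
  rw [pd, e, fderiv_comp x hd (inrCLM b f).differentiableAt,
    (inrCLM b f).fderiv]
  have e2 : (inrCLM b f) (Pi.single (Sum.inr α) 1) = Pi.single α 1 := by
    ext c
    simp [inrCLM, Pi.single_apply]
  simp only [ContinuousLinearMap.coe_comp', Function.comp_apply, e2]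
  rfl

lemma pd_comp_inr_inl {h : (Fin f → ℝ) → ℝ} {x : PtM b f}
    (hd : DifferentiableAt ℝ h (x ∘ Sum.inr)) (a : Fin b) :
    pd (Sum.inl a : Fin b ⊕ Fin f) (fun x => h (x ∘ Sum.inr)) x = 0 := by
  have e : (fun x : PtM b f => h (x ∘ Sum.inr)) = h ∘ (inrCLM b f) := rfl
  rw [pd, e, fderiv_comp x hd (inrCLM b f).differentiableAt,
    (inrCLM b f).fderiv]
  have e2 : (inrCLM b f) (Pi.single (Sum.inl a) 1) = 0 := by
    ext c
    simp [inrCLM, Pi.single_apply]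
  simp only [ContinuousLinearMap.coe_comp', Function.comp_apply, e2, map_zero]

-- entry lemmas for the warped metric
lemma wm_ll (gB gF ρ) (x : PtM b f) (a a' : Fin b) :
    warpMetric gB gF ρ x (Sum.inl a) (Sum.inl a') = gB (x ∘ Sum.inl) a a' := rfl
lemma wm_rr (gB gF ρ) (x : PtM b f) (α β : Fin f) :
    warpMetric gB gF ρ x (Sum.inr α) (Sum.inr β)
      = (ρ (x ∘ Sum.inl))^2 * gF (x ∘ Sum.inr) α β := rfl
lemma wm_lr (gB gF ρ) (x : PtM b f) (a : Fin b) (β : Fin f) :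
    warpMetric gB gF ρ x (Sum.inl a) (Sum.inr β) = 0 := rfl
lemma wm_rl (gB gF ρ) (x : PtM b f) (α : Fin f) (a : Fin b) :
    warpMetric gB gF ρ x (Sum.inr α) (Sum.inl a) = 0 := rfl
lemma wi_ll (gBinv gFinv ρ) (x : PtM b f) (a a' : Fin b) :
    warpMetricInv gBinv gFinv ρ x (Sum.inl a) (Sum.inl a')
      = gBinv (x ∘ Sum.inl) a a' := rfl
lemma wi_rr (gBinv gFinv ρ) (x : PtM b f) (α β : Fin f) :
    warpMetricInv gBinv gFinv ρ x (Sum.inr α) (Sum.inr β)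
      = ((ρ (x ∘ Sum.inl))^2)⁻¹ * gFinv (x ∘ Sum.inr) α β := rfl
lemma wi_lr (gBinv gFinv ρ) (x : PtM b f) (a : Fin b) (β : Fin f) :
    warpMetricInv gBinv gFinv ρ x (Sum.inl a) (Sum.inr β) = 0 := rfl
lemma wi_rl (gBinv gFinv ρ) (x : PtM b f) (α : Fin f) (a : Fin b) :
    warpMetricInv gBinv gFinv ρ x (Sum.inr α) (Sum.inl a) = 0 := rfl
end Warp

section WarpChr
variable {b f : ℕ}
variable {gB gBinv : (Fin b → ℝ) → Matrix (Fin b) (Fin b) ℝ}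
variable {gF gFinv : (Fin f → ℝ) → Matrix (Fin f) (Fin f) ℝ}
variable {ρ : (Fin b → ℝ) → ℝ}

lemma pdwm_l_ll (hgB : ∀ i j, ContDiff ℝ (⊤ : ℕ∞) (fun y => gB y i j)) (x : PtM b f)
    (c a a' : Fin b) :
    pd (Sum.inl c : Fin b ⊕ Fin f) (fun x => warpMetric gB gF ρ x (Sum.inl a) (Sum.inl a')) x
      = pd c (fun y => gB y a a') (x ∘ Sum.inl) :=
  pd_comp_inl_inl (((hgB a a').differentiable (by simp)) _) c

lemma pdwm_r_ll (hgB : ∀ i j, ContDiff ℝ (⊤ : ℕ∞) (fun y => gB y i j)) (x : PtM b f)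
    (γ : Fin f) (a a' : Fin b) :
    pd (Sum.inr γ : Fin b ⊕ Fin f) (fun x => warpMetric gB gF ρ x (Sum.inl a) (Sum.inl a')) x
      = 0 :=
  pd_comp_inl_inr (((hgB a a').differentiable (by simp)) _) γ

lemma pdwm_l_rr (hgF : ∀ i j, ContDiff ℝ (⊤ : ℕ∞) (fun z => gF z i j)) (hρ : ContDiff ℝ (⊤ : ℕ∞) ρ)
    (x : PtM b f) (c : Fin b) (α β : Fin f) :
    pd (Sum.inl c : Fin b ⊕ Fin f) (fun x => warpMetric gB gF ρ x (Sum.inr α) (Sum.inr β)) x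
      = pd c (fun w => (ρ w)^2) (x ∘ Sum.inl) * gF (x ∘ Sum.inr) α β := by
  have e : (fun x : PtM b f => warpMetric gB gF ρ x (Sum.inr α) (Sum.inr β))
      = fun x => (ρ (x ∘ Sum.inl))^2 * gF (x ∘ Sum.inr) α β := rfl
  rw [e, pd_mul (f := fun x : PtM b f => (ρ (x ∘ Sum.inl))^2)
    (g := fun x : PtM b f => gF (x ∘ Sum.inr) α β)
    (diff_comp_inl (((hρ.pow 2).differentiable (by simp)) _))
    (diff_comp_inr (((hgF α β).differentiable (by simp)) _))]
  rw [pd_comp_inl_inl (h := fun w => (ρ w)^2) (((hρ.pow 2).differentiable (by simp)) _) c,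
    pd_comp_inr_inl (h := fun z => gF z α β) (((hgF α β).differentiable (by simp)) _) c]
  ring

lemma pdwm_r_rr (hgF : ∀ i j, ContDiff ℝ (⊤ : ℕ∞) (fun z => gF z i j)) (hρ : ContDiff ℝ (⊤ : ℕ∞) ρ)
    (x : PtM b f) (γ : Fin f) (α β : Fin f) :
    pd (Sum.inr γ : Fin b ⊕ Fin f) (fun x => warpMetric gB gF ρ x (Sum.inr α) (Sum.inr β)) x
      = (ρ (x ∘ Sum.inl))^2 * pd γ (fun z => gF z α β) (x ∘ Sum.inr) := by
  have e : (fun x : PtM b f => warpMetric gB gF ρ x (Sum.inr α) (Sum.inr β))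
      = fun x => (ρ (x ∘ Sum.inl))^2 * gF (x ∘ Sum.inr) α β := rfl
  rw [e, pd_mul (f := fun x : PtM b f => (ρ (x ∘ Sum.inl))^2)
    (g := fun x : PtM b f => gF (x ∘ Sum.inr) α β)
    (diff_comp_inl (((hρ.pow 2).differentiable (by simp)) _))
    (diff_comp_inr (((hgF α β).differentiable (by simp)) _))]
  rw [pd_comp_inl_inr (h := fun w => (ρ w)^2) (((hρ.pow 2).differentiable (by simp)) _) γ,
    pd_comp_inr_inr (h := fun z => gF z α β) (((hgF α β).differentiable (by simp)) _) γ]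
  ring

lemma pdwm_any_lr (x : PtM b f) (d : Fin b ⊕ Fin f) (a : Fin b) (β : Fin f) :
    pd d (fun x => warpMetric gB gF ρ x (Sum.inl a) (Sum.inr β)) x = 0 :=
  pd_zero_fun (fun x => wm_lr gB gF ρ x a β) d x

lemma pdwm_any_rl (x : PtM b f) (d : Fin b ⊕ Fin f) (α : Fin f) (a : Fin b) :
    pd d (fun x => warpMetric gB gF ρ x (Sum.inr α) (Sum.inl a)) x = 0 :=
  pd_zero_fun (fun x => wm_rl gB gF ρ x α a) d x

lemma chr_lll (hgB : ∀ i j, ContDiff ℝ (⊤ : ℕ∞) (fun y => gB y i j)) (x : PtM b f) (k i j : Fin b) :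
    christoffel (warpMetric gB gF ρ) (warpMetricInv gBinv gFinv ρ)
      (Sum.inl k) (Sum.inl i) (Sum.inl j) x
    = christoffel gB gBinv k i j (x ∘ Sum.inl) := by
  rw [christoffel, christoffel, Fintype.sum_sum_type]
  simp only [wi_lr, zero_mul, Finset.sum_const_zero, add_zero]
  congr 1
  apply Finset.sum_congr rfl
  intro l _
  rw [wi_ll, pdwm_l_ll hgB x i l j, pdwm_l_ll hgB x j l i, pdwm_l_ll hgB x l i j]

lemma chr_llr (hgB : ∀ i j, ContDiff ℝ (⊤ : ℕ∞) (fun y => gB y i j)) (x : PtM b f)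
    (k i : Fin b) (β : Fin f) :
    christoffel (warpMetric gB gF ρ) (warpMetricInv gBinv gFinv ρ)
      (Sum.inl k) (Sum.inl i) (Sum.inr β) x = 0 := by
  rw [christoffel, Fintype.sum_sum_type]
  simp only [wi_lr, zero_mul, Finset.sum_const_zero, add_zero]
  rw [Finset.sum_eq_zero, mul_zero]
  intro l _
  rw [pdwm_any_lr x (Sum.inl i) l β, pdwm_r_ll hgB x β l i, pdwm_any_lr x (Sum.inl l) i β]
  ring

lemma chr_lrl (hgB : ∀ i j, ContDiff ℝ (⊤ : ℕ∞) (fun y => gB y i j)) (x : PtM b f)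
    (k : Fin b) (α : Fin f) (j : Fin b) :
    christoffel (warpMetric gB gF ρ) (warpMetricInv gBinv gFinv ρ)
      (Sum.inl k) (Sum.inr α) (Sum.inl j) x = 0 := by
  rw [christoffel, Fintype.sum_sum_type]
  simp only [wi_lr, zero_mul, Finset.sum_const_zero, add_zero]
  rw [Finset.sum_eq_zero, mul_zero]
  intro l _
  rw [pdwm_r_ll hgB x α l j, pdwm_any_lr x (Sum.inl j) l α, pdwm_any_rl x (Sum.inl l) α j]
  ring

lemma chr_rll (hgB : ∀ i j, ContDiff ℝ (⊤ : ℕ∞) (fun y => gB y i j)) (x : PtM b f)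
    (γ : Fin f) (i j : Fin b) :
    christoffel (warpMetric gB gF ρ) (warpMetricInv gBinv gFinv ρ)
      (Sum.inr γ) (Sum.inl i) (Sum.inl j) x = 0 := by
  rw [christoffel, Fintype.sum_sum_type]
  simp only [wi_rl, zero_mul, Finset.sum_const_zero, zero_add]
  rw [Finset.sum_eq_zero, mul_zero]
  intro δ _
  rw [pdwm_any_rl x (Sum.inl i) δ j, pdwm_any_rl x (Sum.inl j) δ i, pdwm_r_ll hgB x δ i j]
  ring

lemma chr_lrr (hgF : ∀ i j, ContDiff ℝ (⊤ : ℕ∞) (fun z => gF z i j)) (hρ : ContDiff ℝ (⊤ : ℕ∞) ρ)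
    (x : PtM b f) (k : Fin b) (α β : Fin f) :
    christoffel (warpMetric gB gF ρ) (warpMetricInv gBinv gFinv ρ)
      (Sum.inl k) (Sum.inr α) (Sum.inr β) x
    = -(1/2) * (∑ c, gBinv (x ∘ Sum.inl) k c * pd c (fun w => (ρ w)^2) (x ∘ Sum.inl))
        * gF (x ∘ Sum.inr) α β := by
  rw [christoffel, Fintype.sum_sum_type]
  simp only [wi_lr, zero_mul, Finset.sum_const_zero, add_zero]
  rw [Finset.sum_congr rfl (fun l _ => by
    rw [wi_ll, pdwm_any_lr x (Sum.inr α) l β, pdwm_any_lr x (Sum.inr β) l α,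
      pdwm_l_rr hgF hρ x l α β])]
  rw [Finset.sum_congr rfl (fun l _ =>
    show gBinv (x ∘ Sum.inl) k l *
        (0 + 0 - pd l (fun w => (ρ w)^2) (x ∘ Sum.inl) * gF (x ∘ Sum.inr) α β)
      = -(gBinv (x ∘ Sum.inl) k l * pd l (fun w => (ρ w)^2) (x ∘ Sum.inl))
          * gF (x ∘ Sum.inr) α β from by ring)]
  rw [← Finset.sum_mul]
  rw [Finset.sum_neg_distrib]
  ring

lemma chr_rlr (hgF : ∀ i j, ContDiff ℝ (⊤ : ℕ∞) (fun z => gF z i j)) (hρ : ContDiff ℝ (⊤ : ℕ∞) ρ)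
    (x : PtM b f) (γ : Fin f) (a : Fin b) (β : Fin f)
    (hFE : gFinv (x ∘ Sum.inr) * gF (x ∘ Sum.inr) = 1) :
    christoffel (warpMetric gB gF ρ) (warpMetricInv gBinv gFinv ρ)
      (Sum.inr γ) (Sum.inl a) (Sum.inr β) x
    = (1/2) * ((ρ (x ∘ Sum.inl))^2)⁻¹ * pd a (fun w => (ρ w)^2) (x ∘ Sum.inl)
        * (if γ = β then 1 else 0) := by
  rw [christoffel, Fintype.sum_sum_type]
  simp only [wi_rl, zero_mul, Finset.sum_const_zero, zero_add]
  rw [Finset.sum_congr rfl (fun δ _ => by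
    rw [wi_rr, pdwm_l_rr hgF hρ x a δ β, pdwm_any_rl x (Sum.inr β) δ a,
      pdwm_any_lr x (Sum.inr δ) a β])]
  rw [Finset.sum_congr rfl (fun δ _ =>
    show ((ρ (x ∘ Sum.inl))^2)⁻¹ * gFinv (x ∘ Sum.inr) γ δ *
        (pd a (fun w => (ρ w)^2) (x ∘ Sum.inl) * gF (x ∘ Sum.inr) δ β + 0 - 0)
      = (((ρ (x ∘ Sum.inl))^2)⁻¹ * pd a (fun w => (ρ w)^2) (x ∘ Sum.inl))
          * (gFinv (x ∘ Sum.inr) γ δ * gF (x ∘ Sum.inr) δ β) from by ring)]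
  rw [← Finset.mul_sum]
  have hs : ∑ δ, gFinv (x ∘ Sum.inr) γ δ * gF (x ∘ Sum.inr) δ β
      = if γ = β then 1 else 0 := by
    have := congrArg (fun M => M γ β) hFE
    simpa [Matrix.mul_apply, Matrix.one_apply] using this
  rw [hs]
  ring

lemma chr_rrl (hgF : ∀ i j, ContDiff ℝ (⊤ : ℕ∞) (fun z => gF z i j)) (hρ : ContDiff ℝ (⊤ : ℕ∞) ρ)
    (x : PtM b f) (γ : Fin f) (α : Fin f) (a : Fin b)
    (hFE : gFinv (x ∘ Sum.inr) * gF (x ∘ Sum.inr) = 1) :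
    christoffel (warpMetric gB gF ρ) (warpMetricInv gBinv gFinv ρ)
      (Sum.inr γ) (Sum.inr α) (Sum.inl a) x
    = (1/2) * ((ρ (x ∘ Sum.inl))^2)⁻¹ * pd a (fun w => (ρ w)^2) (x ∘ Sum.inl)
        * (if γ = α then 1 else 0) := by
  rw [christoffel, Fintype.sum_sum_type]
  simp only [wi_rl, zero_mul, Finset.sum_const_zero, zero_add]
  rw [Finset.sum_congr rfl (fun δ _ => by
    rw [wi_rr, pdwm_any_rl x (Sum.inr α) δ a, pdwm_l_rr hgF hρ x a δ α,
      pdwm_any_rl x (Sum.inr δ) α a])]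
  rw [Finset.sum_congr rfl (fun δ _ =>
    show ((ρ (x ∘ Sum.inl))^2)⁻¹ * gFinv (x ∘ Sum.inr) γ δ *
        (0 + pd a (fun w => (ρ w)^2) (x ∘ Sum.inl) * gF (x ∘ Sum.inr) δ α - 0)
      = (((ρ (x ∘ Sum.inl))^2)⁻¹ * pd a (fun w => (ρ w)^2) (x ∘ Sum.inl))
          * (gFinv (x ∘ Sum.inr) γ δ * gF (x ∘ Sum.inr) δ α) from by ring)]
  rw [← Finset.mul_sum]
  have hs : ∑ δ, gFinv (x ∘ Sum.inr) γ δ * gF (x ∘ Sum.inr) δ α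
      = if γ = α then 1 else 0 := by
    have := congrArg (fun M => M γ α) hFE
    simpa [Matrix.mul_apply, Matrix.one_apply] using this
  rw [hs]
  ring

lemma chr_rrr (hgF : ∀ i j, ContDiff ℝ (⊤ : ℕ∞) (fun z => gF z i j)) (hρ : ContDiff ℝ (⊤ : ℕ∞) ρ)
    (x : PtM b f) (γ α β : Fin f) (hρx : (ρ (x ∘ Sum.inl))^2 ≠ 0) :
    christoffel (warpMetric gB gF ρ) (warpMetricInv gBinv gFinv ρ)
      (Sum.inr γ) (Sum.inr α) (Sum.inr β) x
    = christoffel gF gFinv γ α β (x ∘ Sum.inr) := by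
  rw [christoffel, christoffel, Fintype.sum_sum_type]
  simp only [wi_rl, zero_mul, Finset.sum_const_zero, zero_add]
  congr 1
  apply Finset.sum_congr rfl
  intro δ _
  rw [wi_rr, pdwm_r_rr hgF hρ x α δ β, pdwm_r_rr hgF hρ x β δ α, pdwm_r_rr hgF hρ x δ α β]
  have hρ1 : ρ (x ∘ Sum.inl) ≠ 0 := fun h => hρx (by rw [h]; ring)
  field_simp
end WarpChr

section InvMetric
variable {ι : Type} [Fintype ι] [DecidableEq ι]
variable {g ginv : (ι → ℝ) → Matrix ι ι ℝ}

lemma contDiff_finset_prod {κ : Type} {s : Finset κ} {h : κ → (ι → ℝ) → ℝ}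
    (hh : ∀ a ∈ s, ContDiff ℝ (⊤ : ℕ∞) (h a)) :
    ContDiff ℝ (⊤ : ℕ∞) (fun x => ∏ a ∈ s, h a x) := by
  classical
  induction s using Finset.cons_induction with
  | empty => simpa using contDiff_const
  | cons a s ha ih =>
    have e : (fun x => ∏ c ∈ Finset.cons a s ha, h c x)
        = fun x => h a x * ∏ c ∈ s, h c x := by
      funext x; rw [Finset.prod_cons]
    rw [e]
    exact (hh a (Finset.mem_cons_self a s)).mul
      (ih (fun c hc => hh c (Finset.mem_cons_of_mem hc)))

lemma contDiff_det {A : (ι → ℝ) → Matrix ι ι ℝ}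
    (hA : ∀ i j, ContDiff ℝ (⊤ : ℕ∞) (fun x => A x i j)) :
    ContDiff ℝ (⊤ : ℕ∞) (fun x => (A x).det) := by
  have e : (fun x => (A x).det)
      = fun x => ∑ σ : Equiv.Perm ι, ((Equiv.Perm.sign σ : ℤ) : ℝ) * ∏ i, A x (σ i) i := by
    funext x
    rw [Matrix.det_apply]
    apply Finset.sum_congr rfl
    intro σ _
    rw [Units.smul_def, zsmul_eq_mul]
  rw [e]
  apply ContDiff.sum
  intro σ _
  exact contDiff_const.mul (contDiff_finset_prod (fun i _ => hA (σ i) i))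

lemma det_ne_zero_of_right_inv (hinv : ∀ z, g z * ginv z = 1) (z : ι → ℝ) :
    (g z).det ≠ 0 := by
  have h : (g z).det * (ginv z).det = 1 := by
    rw [← Matrix.det_mul, hinv z, Matrix.det_one]
  intro h0
  rw [h0, zero_mul] at h
  exact one_ne_zero h.symm

lemma ginv_entry_eq (hinv : ∀ z, g z * ginv z = 1) (z : ι → ℝ) (i j : ι) :
    ginv z i j = ((g z).det)⁻¹ * (g z).adjugate i j := by
  have h := Matrix.inv_eq_right_inv (hinv z)
  rw [← h, Matrix.inv_def, Matrix.smul_apply, Ring.inverse_eq_inv', smul_eq_mul]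

lemma ginv_smooth (hg : ∀ i j, ContDiff ℝ (⊤ : ℕ∞) (fun z => g z i j))
    (hinv : ∀ z, g z * ginv z = 1) (i j : ι) :
    ContDiff ℝ (⊤ : ℕ∞) (fun z => ginv z i j) := by
  have e : (fun z => ginv z i j) = fun z => ((g z).det)⁻¹ * (g z).adjugate i j :=
    funext (fun z => ginv_entry_eq hinv z i j)
  rw [e]
  apply ContDiff.mul
  · exact (contDiff_det hg).inv (det_ne_zero_of_right_inv hinv)
  · have e2 : (fun z => (g z).adjugate i j)
        = fun z => ((g z).updateRow j (Pi.single i 1)).det := by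
      funext z; rw [Matrix.adjugate_apply]
    rw [e2]
    apply contDiff_det
    intro i' j'
    by_cases h : i' = j
    · simp only [Matrix.updateRow_apply, h, if_true]
      exact contDiff_const
    · simp only [Matrix.updateRow_apply, h, if_false]
      exact hg i' j'

lemma ginv_symm (hsymm : ∀ z i j, g z i j = g z j i)
    (hinv : ∀ z, g z * ginv z = 1) (z : ι → ℝ) (i j : ι) :
    ginv z i j = ginv z j i := by
  have h := Matrix.inv_eq_right_inv (hinv z)
  have htr : (g z).transpose = g z := Matrix.ext (fun i j => hsymm z j i)
  have : (ginv z).transpose = ginv z := by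
    rw [← h, Matrix.transpose_nonsing_inv, htr]
  exact (congrArg (fun M => M i j) this).symm.trans rfl

lemma ginv_mul_g (hinv : ∀ z, g z * ginv z = 1) (z : ι → ℝ) (i j : ι) :
    ∑ c, ginv z i c * g z c j = if i = j then 1 else 0 := by
  have h := mul_eq_one_comm.mp (hinv z)
  have := congrArg (fun M => M i j) h
  simpa [Matrix.mul_apply, Matrix.one_apply] using this

lemma pd_ginv (hg : ∀ i j, ContDiff ℝ (⊤ : ℕ∞) (fun z => g z i j))
    (hinv : ∀ z, g z * ginv z = 1) (φ γ δ : ι) (z : ι → ℝ) :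
    pd φ (fun w => ginv w γ δ) z
      = -∑ l, ∑ ψ, ginv z γ l * pd φ (fun w => g w l ψ) z * ginv z ψ δ := by
  have hginv := ginv_smooth hg hinv
  -- differentiate the identity ∑_μ g_{νμ} ginv_{μδ} = const
  have step1 : ∀ ν : ι,
      ∑ μ, (pd φ (fun w => g w ν μ) z * ginv z μ δ
        + g z ν μ * pd φ (fun w => ginv w μ δ) z) = 0 := by
    intro ν
    have hconst : (fun w => ∑ μ, g w ν μ * ginv w μ δ)
        = fun _ => (if ν = δ then (1:ℝ) else 0) := by
      funext w
      have := congrArg (fun M => M ν δ) (hinv w)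
      simpa [Matrix.mul_apply, Matrix.one_apply] using this
    have h0 : pd φ (fun w => ∑ μ, g w ν μ * ginv w μ δ) z = 0 := by
      rw [hconst]; exact pd_const _ φ z
    rw [pd_sum (fun μ _ => ((hg ν μ).differentiable (by simp) z).fun_mul
      ((hginv μ δ).differentiable (by simp) z)) φ] at h0
    rw [← h0]
    apply Finset.sum_congr rfl
    intro μ _
    rw [pd_mul ((hg ν μ).differentiable (by simp) z) ((hginv μ δ).differentiable (by simp) z)]
  -- contract with ginv
  have e1 : pd φ (fun w => ginv w γ δ) z
      = ∑ μ, (if γ = μ then (1:ℝ) else 0) * pd φ (fun w => ginv w μ δ) z := by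
    rw [Finset.sum_eq_single γ (fun μ _ hμ => by rw [if_neg (Ne.symm hμ), zero_mul])
      (by simp)]
    rw [if_pos rfl, one_mul]
  rw [e1]
  have e2 : ∀ μ, (if γ = μ then (1:ℝ) else 0) * pd φ (fun w => ginv w μ δ) z
      = ∑ ν, ginv z γ ν * (g z ν μ * pd φ (fun w => ginv w μ δ) z) := by
    intro μ
    rw [← ginv_mul_g hinv z γ μ, Finset.sum_mul]
    apply Finset.sum_congr rfl
    intro ν _
    ring
  rw [Finset.sum_congr rfl (fun μ _ => e2 μ), Finset.sum_comm]
  have e3 : ∀ ν, ∑ μ, ginv z γ ν * (g z ν μ * pd φ (fun w => ginv w μ δ) z)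
      = ginv z γ ν * (-∑ μ, pd φ (fun w => g w ν μ) z * ginv z μ δ) := by
    intro ν
    rw [← Finset.mul_sum]
    congr 1
    have := step1 ν
    rw [Finset.sum_add_distrib] at this
    linarith [this]
  rw [Finset.sum_congr rfl (fun ν _ => e3 ν)]
  rw [← Finset.sum_neg_distrib]
  apply Finset.sum_congr rfl
  intro ν _
  rw [mul_neg, Finset.mul_sum]
  congr 1
  apply Finset.sum_congr rfl
  intro μ _
  ring

/-- Covariant constancy of the inverse metric. -/
lemma nabla_ginv (hg : ∀ i j, ContDiff ℝ (⊤ : ℕ∞) (fun z => g z i j))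
    (hsymm : ∀ z i j, g z i j = g z j i)
    (hinv : ∀ z, g z * ginv z = 1) (φ γ δ : ι) (z : ι → ℝ) :
    pd φ (fun w => ginv w γ δ) z
      + ∑ ψ, christoffel g ginv γ φ ψ z * ginv z ψ δ
      + ∑ ψ, christoffel g ginv δ φ ψ z * ginv z γ ψ = 0 := by
  have hsy : ∀ (i j : ι), (fun w => g w i j) = (fun w => g w j i) :=
    fun i j => funext (fun w => hsymm w i j)
  have t1 : ∑ ψ, christoffel g ginv γ φ ψ z * ginv z ψ δ
      = ∑ ψ, ∑ l, (1/2) * (ginv z γ l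
          * (pd φ (fun w => g w l ψ) z + pd ψ (fun w => g w l φ) z
            - pd l (fun w => g w φ ψ) z) * ginv z ψ δ) := by
    apply Finset.sum_congr rfl
    intro ψ _
    rw [christoffel, Finset.mul_sum, Finset.sum_mul]
    apply Finset.sum_congr rfl
    intro l _
    ring
  have t2 : ∑ ψ, christoffel g ginv δ φ ψ z * ginv z γ ψ
      = ∑ ψ, ∑ l, (1/2) * (ginv z δ ψ
          * (pd φ (fun w => g w ψ l) z + pd l (fun w => g w ψ φ) z
            - pd ψ (fun w => g w φ l) z) * ginv z γ l) := by
    rw [Finset.sum_congr rfl (fun ψ _ => by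
      rw [christoffel, Finset.mul_sum, Finset.sum_mul])]
    rw [Finset.sum_comm]
    apply Finset.sum_congr rfl
    intro ψ _
    apply Finset.sum_congr rfl
    intro l _
    ring
  have hBC : ∀ ψ l : ι,
      (1/2) * (ginv z γ l
          * (pd φ (fun w => g w l ψ) z + pd ψ (fun w => g w l φ) z
            - pd l (fun w => g w φ ψ) z) * ginv z ψ δ)
      + (1/2) * (ginv z δ ψ
          * (pd φ (fun w => g w ψ l) z + pd l (fun w => g w ψ φ) z
            - pd ψ (fun w => g w φ l) z) * ginv z γ l)
      = ginv z γ l * pd φ (fun w => g w l ψ) z * ginv z ψ δ := by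
    intro ψ l
    rw [hsy ψ l, hsy ψ φ, hsy φ l, ginv_symm hsymm hinv z δ ψ]
    ring
  rw [pd_ginv hg hinv φ γ δ z, t1, t2]
  rw [add_assoc, ← Finset.sum_add_distrib]
  rw [Finset.sum_congr rfl (fun ψ _ => (Finset.sum_add_distrib).symm)]
  rw [Finset.sum_congr rfl (fun ψ _ => Finset.sum_congr rfl (fun l _ => hBC ψ l))]
  rw [Finset.sum_comm]
  exact neg_add_cancel _
end InvMetric

section CD
variable {b f : ℕ}
variable {gB gBinv : (Fin b → ℝ) → Matrix (Fin b) (Fin b) ℝ}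
variable {gF gFinv : (Fin f → ℝ) → Matrix (Fin f) (Fin f) ℝ}
variable {ρ : (Fin b → ℝ) → ℝ} {K' : (Fin b → ℝ) → Matrix (Fin b) (Fin b) ℝ}
variable {t : (Fin b → ℝ) → ℝ}

local notation "XX" => (fun x : PtM b f => liftB K' x + t (x ∘ Sum.inl) • liftG1 gFinv x)
local notation "WM" => warpMetric gB gF ρ
local notation "WI" => warpMetricInv gBinv gFinv ρ

lemma eXLL (x : PtM b f) (i j : Fin b) :
    XX x (Sum.inl i) (Sum.inl j) = K' (x ∘ Sum.inl) i j := by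
  show liftB K' x (Sum.inl i) (Sum.inl j)
      + t (x ∘ Sum.inl) * liftG1 gFinv x (Sum.inl i) (Sum.inl j) = _
  show K' (x ∘ Sum.inl) i j + t (x ∘ Sum.inl) * 0 = _
  ring

lemma eXRR (x : PtM b f) (γ δ : Fin f) :
    XX x (Sum.inr γ) (Sum.inr δ) = t (x ∘ Sum.inl) * gFinv (x ∘ Sum.inr) γ δ := by
  show liftB K' x (Sum.inr γ) (Sum.inr δ)
      + t (x ∘ Sum.inl) * liftG1 gFinv x (Sum.inr γ) (Sum.inr δ) = _
  show (0:ℝ) + t (x ∘ Sum.inl) * gFinv (x ∘ Sum.inr) γ δ = _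
  ring

lemma eXLR (x : PtM b f) (i : Fin b) (δ : Fin f) :
    XX x (Sum.inl i) (Sum.inr δ) = 0 := by
  show liftB K' x (Sum.inl i) (Sum.inr δ)
      + t (x ∘ Sum.inl) * liftG1 gFinv x (Sum.inl i) (Sum.inr δ) = _
  show (0:ℝ) + t (x ∘ Sum.inl) * 0 = _
  ring

lemma eXRL (x : PtM b f) (γ : Fin f) (j : Fin b) :
    XX x (Sum.inr γ) (Sum.inl j) = 0 := by
  show liftB K' x (Sum.inr γ) (Sum.inl j)
      + t (x ∘ Sum.inl) * liftG1 gFinv x (Sum.inr γ) (Sum.inl j) = _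
  show (0:ℝ) + t (x ∘ Sum.inl) * 0 = _
  ring

lemma cd_lll (hgB : ∀ i j, ContDiff ℝ (⊤ : ℕ∞) (fun y => gB y i j))
    (hK's : ∀ i j, ContDiff ℝ (⊤ : ℕ∞) (fun y => K' y i j)) (x : PtM b f) (c i j : Fin b) :
    covD WM WI XX (Sum.inl c) (Sum.inl i) (Sum.inl j) x
      = covD gB gBinv K' c i j (x ∘ Sum.inl) := by
  rw [covD, covD, Fintype.sum_sum_type, Fintype.sum_sum_type]
  have h1 : pd (Sum.inl c : Fin b ⊕ Fin f) (fun x' => XX x' (Sum.inl i) (Sum.inl j)) x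
      = pd c (fun y => K' y i j) (x ∘ Sum.inl) :=
    (pd_congr (fun x' => eXLL x' i j) _ x).trans
      (pd_comp_inl_inl (((hK's i j).differentiable (by simp)) _) c)
  rw [h1]
  have h2 : ∀ (k : Fin b), ∑ ε : Fin f,
      christoffel WM WI (Sum.inl k) (Sum.inl c) (Sum.inr ε) x * XX x (Sum.inr ε) (Sum.inl j)
      = 0 := fun k => Finset.sum_eq_zero (fun ε _ => by rw [eXRL, mul_zero])
  have h3 : ∀ (k : Fin b), ∑ ε : Fin f,
      christoffel WM WI (Sum.inl k) (Sum.inl c) (Sum.inr ε) x * XX x (Sum.inl i) (Sum.inr ε)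
      = 0 := fun k => Finset.sum_eq_zero (fun ε _ => by rw [eXLR, mul_zero])
  rw [h2 i, h3 j, add_zero, add_zero]
  have h4 : ∑ a : Fin b,
      christoffel WM WI (Sum.inl i) (Sum.inl c) (Sum.inl a) x * XX x (Sum.inl a) (Sum.inl j)
      = ∑ a, christoffel gB gBinv i c a (x ∘ Sum.inl) * K' (x ∘ Sum.inl) a j :=
    Finset.sum_congr rfl (fun a _ => by rw [chr_lll hgB, eXLL])
  have h5 : ∑ a : Fin b,
      christoffel WM WI (Sum.inl j) (Sum.inl c) (Sum.inl a) x * XX x (Sum.inl i) (Sum.inl a)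
      = ∑ a, christoffel gB gBinv j c a (x ∘ Sum.inl) * K' (x ∘ Sum.inl) i a :=
    Finset.sum_congr rfl (fun a _ => by rw [chr_lll hgB, eXLL])
  rw [h4, h5]

lemma cd_llr (hgB : ∀ i j, ContDiff ℝ (⊤ : ℕ∞) (fun y => gB y i j)) (x : PtM b f)
    (c i : Fin b) (γ : Fin f) :
    covD WM WI XX (Sum.inl c) (Sum.inl i) (Sum.inr γ) x = 0 := by
  rw [covD, Fintype.sum_sum_type, Fintype.sum_sum_type]
  rw [pd_zero_fun (fun x' => eXLR x' i γ) _ x]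
  have hz1 : ∑ a : Fin b, christoffel WM WI (Sum.inl i) (Sum.inl c) (Sum.inl a) x
      * XX x (Sum.inl a) (Sum.inr γ) = 0 :=
    Finset.sum_eq_zero (fun a _ => by rw [eXLR, mul_zero])
  have hz2 : ∑ ε : Fin f, christoffel WM WI (Sum.inl i) (Sum.inl c) (Sum.inr ε) x
      * XX x (Sum.inr ε) (Sum.inr γ) = 0 :=
    Finset.sum_eq_zero (fun ε _ => by rw [chr_llr hgB, zero_mul])
  have hz3 : ∑ a : Fin b, christoffel WM WI (Sum.inr γ) (Sum.inl c) (Sum.inl a) x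
      * XX x (Sum.inl i) (Sum.inl a) = 0 :=
    Finset.sum_eq_zero (fun a _ => by rw [chr_rll hgB, zero_mul])
  have hz4 : ∑ ε : Fin f, christoffel WM WI (Sum.inr γ) (Sum.inl c) (Sum.inr ε) x
      * XX x (Sum.inl i) (Sum.inr ε) = 0 :=
    Finset.sum_eq_zero (fun ε _ => by rw [eXLR, mul_zero])
  rw [hz1, hz2, hz3, hz4]
  ring

lemma cd_lrl (hgB : ∀ i j, ContDiff ℝ (⊤ : ℕ∞) (fun y => gB y i j)) (x : PtM b f)
    (c : Fin b) (γ : Fin f) (j : Fin b) :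
    covD WM WI XX (Sum.inl c) (Sum.inr γ) (Sum.inl j) x = 0 := by
  rw [covD, Fintype.sum_sum_type, Fintype.sum_sum_type]
  rw [pd_zero_fun (fun x' => eXRL x' γ j) _ x]
  have hz1 : ∑ a : Fin b, christoffel WM WI (Sum.inr γ) (Sum.inl c) (Sum.inl a) x
      * XX x (Sum.inl a) (Sum.inl j) = 0 :=
    Finset.sum_eq_zero (fun a _ => by rw [chr_rll hgB, zero_mul])
  have hz2 : ∑ ε : Fin f, christoffel WM WI (Sum.inr γ) (Sum.inl c) (Sum.inr ε) x
      * XX x (Sum.inr ε) (Sum.inl j) = 0 :=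
    Finset.sum_eq_zero (fun ε _ => by rw [eXRL, mul_zero])
  have hz3 : ∑ a : Fin b, christoffel WM WI (Sum.inl j) (Sum.inl c) (Sum.inl a) x
      * XX x (Sum.inr γ) (Sum.inl a) = 0 :=
    Finset.sum_eq_zero (fun a _ => by rw [eXRL, mul_zero])
  have hz4 : ∑ ε : Fin f, christoffel WM WI (Sum.inl j) (Sum.inl c) (Sum.inr ε) x
      * XX x (Sum.inr γ) (Sum.inr ε) = 0 :=
    Finset.sum_eq_zero (fun ε _ => by rw [chr_llr hgB, zero_mul])
  rw [hz1, hz2, hz3, hz4]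
  ring

lemma cd_rll (hgB : ∀ i j, ContDiff ℝ (⊤ : ℕ∞) (fun y => gB y i j))
    (hK's : ∀ i j, ContDiff ℝ (⊤ : ℕ∞) (fun y => K' y i j)) (x : PtM b f)
    (φ : Fin f) (i j : Fin b) :
    covD WM WI XX (Sum.inr φ) (Sum.inl i) (Sum.inl j) x = 0 := by
  rw [covD, Fintype.sum_sum_type, Fintype.sum_sum_type]
  have h1 : pd (Sum.inr φ : Fin b ⊕ Fin f) (fun x' => XX x' (Sum.inl i) (Sum.inl j)) x = 0 :=
    (pd_congr (fun x' => eXLL x' i j) _ x).trans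
      (pd_comp_inl_inr (((hK's i j).differentiable (by simp)) _) φ)
  rw [h1]
  have hz1 : ∑ a : Fin b, christoffel WM WI (Sum.inl i) (Sum.inr φ) (Sum.inl a) x
      * XX x (Sum.inl a) (Sum.inl j) = 0 :=
    Finset.sum_eq_zero (fun a _ => by rw [chr_lrl hgB, zero_mul])
  have hz2 : ∑ ε : Fin f, christoffel WM WI (Sum.inl i) (Sum.inr φ) (Sum.inr ε) x
      * XX x (Sum.inr ε) (Sum.inl j) = 0 :=
    Finset.sum_eq_zero (fun ε _ => by rw [eXRL, mul_zero])
  have hz3 : ∑ a : Fin b, christoffel WM WI (Sum.inl j) (Sum.inr φ) (Sum.inl a) x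
      * XX x (Sum.inl i) (Sum.inl a) = 0 :=
    Finset.sum_eq_zero (fun a _ => by rw [chr_lrl hgB, zero_mul])
  have hz4 : ∑ ε : Fin f, christoffel WM WI (Sum.inl j) (Sum.inr φ) (Sum.inr ε) x
      * XX x (Sum.inl i) (Sum.inr ε) = 0 :=
    Finset.sum_eq_zero (fun ε _ => by rw [eXLR, mul_zero])
  rw [hz1, hz2, hz3, hz4]
  ring

lemma cd_lrr (hgB : ∀ i j, ContDiff ℝ (⊤ : ℕ∞) (fun y => gB y i j))
    (hgF : ∀ i j, ContDiff ℝ (⊤ : ℕ∞) (fun z => gF z i j))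
    (hgFinv : ∀ z, gF z * gFinv z = 1)
    (hρ : ContDiff ℝ (⊤ : ℕ∞) ρ) (ht : ∀ y, DifferentiableAt ℝ t y)
    (x : PtM b f) (c : Fin b) (γ δ : Fin f) :
    covD WM WI XX (Sum.inl c) (Sum.inr γ) (Sum.inr δ) x
      = (pd c t (x ∘ Sum.inl)
          + t (x ∘ Sum.inl) * ((ρ (x ∘ Sum.inl))^2)⁻¹
              * pd c (fun w => (ρ w)^2) (x ∘ Sum.inl))
        * gFinv (x ∘ Sum.inr) γ δ := by
  have hFE : ∀ z, gFinv z * gF z = 1 := fun z => mul_eq_one_comm.mp (hgFinv z)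
  have hgFis := ginv_smooth hgF hgFinv
  rw [covD, Fintype.sum_sum_type, Fintype.sum_sum_type]
  have h1 : pd (Sum.inl c : Fin b ⊕ Fin f) (fun x' => XX x' (Sum.inr γ) (Sum.inr δ)) x
      = pd c t (x ∘ Sum.inl) * gFinv (x ∘ Sum.inr) γ δ := by
    refine (pd_congr (fun x' => eXRR x' γ δ) _ x).trans ?_
    rw [pd_mul (f := fun x' : PtM b f => t (x' ∘ Sum.inl))
      (g := fun x' : PtM b f => gFinv (x' ∘ Sum.inr) γ δ)
      (diff_comp_inl (ht _)) (diff_comp_inr (((hgFis γ δ).differentiable (by simp)) _))]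
    rw [pd_comp_inl_inl (h := t) (ht _) c,
      pd_comp_inr_inl (h := fun z => gFinv z γ δ)
        (((hgFis γ δ).differentiable (by simp)) _) c]
    ring
  rw [h1]
  have hz1 : ∑ a : Fin b, christoffel WM WI (Sum.inr γ) (Sum.inl c) (Sum.inl a) x
      * XX x (Sum.inl a) (Sum.inr δ) = 0 :=
    Finset.sum_eq_zero (fun a _ => by rw [chr_rll hgB, zero_mul])
  have hz2 : ∑ a : Fin b, christoffel WM WI (Sum.inr δ) (Sum.inl c) (Sum.inl a) x
      * XX x (Sum.inr γ) (Sum.inl a) = 0 :=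
    Finset.sum_eq_zero (fun a _ => by rw [eXRL, mul_zero])
  rw [hz1, hz2]
  have h2 : ∑ ε : Fin f, christoffel WM WI (Sum.inr γ) (Sum.inl c) (Sum.inr ε) x
      * XX x (Sum.inr ε) (Sum.inr δ)
      = (1/2) * ((ρ (x ∘ Sum.inl))^2)⁻¹ * pd c (fun w => (ρ w)^2) (x ∘ Sum.inl)
        * (t (x ∘ Sum.inl) * gFinv (x ∘ Sum.inr) γ δ) := by
    rw [Finset.sum_congr rfl (fun ε _ => by
      rw [chr_rlr hgF hρ x γ c ε (hFE _), eXRR])]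
    rw [Finset.sum_eq_single γ (fun ε _ hε => by rw [if_neg (Ne.symm hε)]; ring)
      (by simp)]
    rw [if_pos rfl]
    ring
  have h3 : ∑ ε : Fin f, christoffel WM WI (Sum.inr δ) (Sum.inl c) (Sum.inr ε) x
      * XX x (Sum.inr γ) (Sum.inr ε)
      = (1/2) * ((ρ (x ∘ Sum.inl))^2)⁻¹ * pd c (fun w => (ρ w)^2) (x ∘ Sum.inl)
        * (t (x ∘ Sum.inl) * gFinv (x ∘ Sum.inr) γ δ) := by
    rw [Finset.sum_congr rfl (fun ε _ => by
      rw [chr_rlr hgF hρ x δ c ε (hFE _), eXRR])]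
    rw [Finset.sum_eq_single δ (fun ε _ hε => by rw [if_neg (Ne.symm hε)]; ring)
      (by simp)]
    rw [if_pos rfl]
    ring
  rw [h2, h3]
  ring

lemma cd_rlr (hgB : ∀ i j, ContDiff ℝ (⊤ : ℕ∞) (fun y => gB y i j))
    (hgF : ∀ i j, ContDiff ℝ (⊤ : ℕ∞) (fun z => gF z i j))
    (hgFinv : ∀ z, gF z * gFinv z = 1)
    (hρ : ContDiff ℝ (⊤ : ℕ∞) ρ) (x : PtM b f) (φ : Fin f) (i : Fin b) (δ : Fin f) :
    covD WM WI XX (Sum.inr φ) (Sum.inl i) (Sum.inr δ) x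
      = (if δ = φ then 1 else 0) *
          ((1/2) * ((ρ (x ∘ Sum.inl))^2)⁻¹
              * (∑ a, pd a (fun w => (ρ w)^2) (x ∘ Sum.inl) * K' (x ∘ Sum.inl) i a)
            - (1/2) * t (x ∘ Sum.inl)
              * (∑ c, gBinv (x ∘ Sum.inl) i c * pd c (fun w => (ρ w)^2) (x ∘ Sum.inl))) := by
  have hFE : ∀ z, gFinv z * gF z = 1 := fun z => mul_eq_one_comm.mp (hgFinv z)
  rw [covD, Fintype.sum_sum_type, Fintype.sum_sum_type]
  rw [pd_zero_fun (fun x' => eXLR x' i δ) _ x]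
  have hz1 : ∑ a : Fin b, christoffel WM WI (Sum.inl i) (Sum.inr φ) (Sum.inl a) x
      * XX x (Sum.inl a) (Sum.inr δ) = 0 :=
    Finset.sum_eq_zero (fun a _ => by rw [chr_lrl hgB, zero_mul])
  rw [hz1]
  have h2 : ∑ ε : Fin f, christoffel WM WI (Sum.inl i) (Sum.inr φ) (Sum.inr ε) x
      * XX x (Sum.inr ε) (Sum.inr δ)
      = -(1/2) * t (x ∘ Sum.inl)
          * (∑ c, gBinv (x ∘ Sum.inl) i c * pd c (fun w => (ρ w)^2) (x ∘ Sum.inl))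
          * (if φ = δ then 1 else 0) := by
    rw [Finset.sum_congr rfl (fun ε _ => by
      rw [chr_lrr hgF hρ x i φ ε, eXRR])]
    have e : ∀ ε : Fin f, -(1/2)
        * (∑ c, gBinv (x ∘ Sum.inl) i c * pd c (fun w => (ρ w)^2) (x ∘ Sum.inl))
        * gF (x ∘ Sum.inr) φ ε * (t (x ∘ Sum.inl) * gFinv (x ∘ Sum.inr) ε δ)
        = -(1/2) * t (x ∘ Sum.inl)
            * (∑ c, gBinv (x ∘ Sum.inl) i c * pd c (fun w => (ρ w)^2) (x ∘ Sum.inl))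
            * (gF (x ∘ Sum.inr) φ ε * gFinv (x ∘ Sum.inr) ε δ) := fun ε => by ring
    rw [Finset.sum_congr rfl (fun ε _ => e ε), ← Finset.mul_sum]
    have hs : ∑ ε, gF (x ∘ Sum.inr) φ ε * gFinv (x ∘ Sum.inr) ε δ
        = if φ = δ then 1 else 0 := by
      have := congrArg (fun M => M φ δ) (hgFinv (x ∘ Sum.inr))
      simpa [Matrix.mul_apply, Matrix.one_apply] using this
    rw [hs]
  have h3 : ∑ a : Fin b, christoffel WM WI (Sum.inr δ) (Sum.inr φ) (Sum.inl a) x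
      * XX x (Sum.inl i) (Sum.inl a)
      = (if δ = φ then 1 else 0) * ((1/2) * ((ρ (x ∘ Sum.inl))^2)⁻¹
          * (∑ a, pd a (fun w => (ρ w)^2) (x ∘ Sum.inl) * K' (x ∘ Sum.inl) i a)) := by
    rw [Finset.sum_congr rfl (fun a _ => by
      rw [chr_rrl hgF hρ x δ φ a (hFE _), eXLL])]
    rw [Finset.mul_sum, Finset.mul_sum]
    apply Finset.sum_congr rfl
    intro a _
    ring
  have h4 : ∑ ε : Fin f, christoffel WM WI (Sum.inr δ) (Sum.inr φ) (Sum.inr ε) x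
      * XX x (Sum.inl i) (Sum.inr ε) = 0 :=
    Finset.sum_eq_zero (fun ε _ => by rw [eXLR, mul_zero])
  rw [h2, h3, h4]
  have : (if φ = δ then (1:ℝ) else 0) = (if δ = φ then 1 else 0) := by
    by_cases h : φ = δ
    · rw [if_pos h, if_pos h.symm]
    · rw [if_neg h, if_neg (Ne.symm h)]
  rw [this]
  ring

lemma cd_rrl (hgB : ∀ i j, ContDiff ℝ (⊤ : ℕ∞) (fun y => gB y i j))
    (hgF : ∀ i j, ContDiff ℝ (⊤ : ℕ∞) (fun z => gF z i j))
    (hgFsymm : ∀ z i j, gF z i j = gF z j i)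
    (hgFinv : ∀ z, gF z * gFinv z = 1)
    (hρ : ContDiff ℝ (⊤ : ℕ∞) ρ) (x : PtM b f) (φ γ : Fin f) (i : Fin b) :
    covD WM WI XX (Sum.inr φ) (Sum.inr γ) (Sum.inl i) x
      = (if γ = φ then 1 else 0) *
          ((1/2) * ((ρ (x ∘ Sum.inl))^2)⁻¹
              * (∑ a, pd a (fun w => (ρ w)^2) (x ∘ Sum.inl) * K' (x ∘ Sum.inl) a i)
            - (1/2) * t (x ∘ Sum.inl)
              * (∑ c, gBinv (x ∘ Sum.inl) i c * pd c (fun w => (ρ w)^2) (x ∘ Sum.inl))) := by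
  have hFE : ∀ z, gFinv z * gF z = 1 := fun z => mul_eq_one_comm.mp (hgFinv z)
  rw [covD, Fintype.sum_sum_type, Fintype.sum_sum_type]
  rw [pd_zero_fun (fun x' => eXRL x' γ i) _ x]
  have h1 : ∑ a : Fin b, christoffel WM WI (Sum.inr γ) (Sum.inr φ) (Sum.inl a) x
      * XX x (Sum.inl a) (Sum.inl i)
      = (if γ = φ then 1 else 0) * ((1/2) * ((ρ (x ∘ Sum.inl))^2)⁻¹
          * (∑ a, pd a (fun w => (ρ w)^2) (x ∘ Sum.inl) * K' (x ∘ Sum.inl) a i)) := by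
    rw [Finset.sum_congr rfl (fun a _ => by
      rw [chr_rrl hgF hρ x γ φ a (hFE _), eXLL])]
    rw [Finset.mul_sum, Finset.mul_sum]
    apply Finset.sum_congr rfl
    intro a _
    ring
  have h2 : ∑ ε : Fin f, christoffel WM WI (Sum.inr γ) (Sum.inr φ) (Sum.inr ε) x
      * XX x (Sum.inr ε) (Sum.inl i) = 0 :=
    Finset.sum_eq_zero (fun ε _ => by rw [eXRL, mul_zero])
  have h3 : ∑ a : Fin b, christoffel WM WI (Sum.inl i) (Sum.inr φ) (Sum.inl a) x
      * XX x (Sum.inr γ) (Sum.inl a) = 0 :=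
    Finset.sum_eq_zero (fun a _ => by rw [eXRL, mul_zero])
  have h4 : ∑ ε : Fin f, christoffel WM WI (Sum.inl i) (Sum.inr φ) (Sum.inr ε) x
      * XX x (Sum.inr γ) (Sum.inr ε)
      = -(1/2) * t (x ∘ Sum.inl)
          * (∑ c, gBinv (x ∘ Sum.inl) i c * pd c (fun w => (ρ w)^2) (x ∘ Sum.inl))
          * (if φ = γ then 1 else 0) := by
    rw [Finset.sum_congr rfl (fun ε _ => by
      rw [chr_lrr hgF hρ x i φ ε, eXRR])]
    have e : ∀ ε : Fin f, -(1/2)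
        * (∑ c, gBinv (x ∘ Sum.inl) i c * pd c (fun w => (ρ w)^2) (x ∘ Sum.inl))
        * gF (x ∘ Sum.inr) φ ε * (t (x ∘ Sum.inl) * gFinv (x ∘ Sum.inr) γ ε)
        = -(1/2) * t (x ∘ Sum.inl)
            * (∑ c, gBinv (x ∘ Sum.inl) i c * pd c (fun w => (ρ w)^2) (x ∘ Sum.inl))
            * (gF (x ∘ Sum.inr) φ ε * gFinv (x ∘ Sum.inr) ε γ) := fun ε => by
      rw [ginv_symm hgFsymm hgFinv (x ∘ Sum.inr) ε γ]
      ring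
    rw [Finset.sum_congr rfl (fun ε _ => e ε), ← Finset.mul_sum]
    have hs : ∑ ε, gF (x ∘ Sum.inr) φ ε * gFinv (x ∘ Sum.inr) ε γ
        = if φ = γ then 1 else 0 := by
      have := congrArg (fun M => M φ γ) (hgFinv (x ∘ Sum.inr))
      simpa [Matrix.mul_apply, Matrix.one_apply] using this
    rw [hs]
  rw [h1, h2, h3, h4]
  have : (if φ = γ then (1:ℝ) else 0) = (if γ = φ then 1 else 0) := by
    by_cases h : φ = γ
    · rw [if_pos h, if_pos h.symm]
    · rw [if_neg h, if_neg (Ne.symm h)]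
  rw [this]
  ring

lemma cd_rrr (hgF : ∀ i j, ContDiff ℝ (⊤ : ℕ∞) (fun z => gF z i j))
    (hgFsymm : ∀ z i j, gF z i j = gF z j i)
    (hgFinv : ∀ z, gF z * gFinv z = 1)
    (hρ : ContDiff ℝ (⊤ : ℕ∞) ρ) (hρpos : ∀ y, 0 < ρ y)
    (ht : ∀ y, DifferentiableAt ℝ t y)
    (x : PtM b f) (φ γ δ : Fin f) :
    covD WM WI XX (Sum.inr φ) (Sum.inr γ) (Sum.inr δ) x = 0 := by
  have hFE : ∀ z, gFinv z * gF z = 1 := fun z => mul_eq_one_comm.mp (hgFinv z)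
  have hgFis := ginv_smooth hgF hgFinv
  have hρx : (ρ (x ∘ Sum.inl))^2 ≠ 0 := pow_ne_zero 2 (hρpos _).ne'
  rw [covD, Fintype.sum_sum_type, Fintype.sum_sum_type]
  have h1 : pd (Sum.inr φ : Fin b ⊕ Fin f) (fun x' => XX x' (Sum.inr γ) (Sum.inr δ)) x
      = t (x ∘ Sum.inl) * pd φ (fun z => gFinv z γ δ) (x ∘ Sum.inr) := by
    refine (pd_congr (fun x' => eXRR x' γ δ) _ x).trans ?_
    rw [pd_mul (f := fun x' : PtM b f => t (x' ∘ Sum.inl))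
      (g := fun x' : PtM b f => gFinv (x' ∘ Sum.inr) γ δ)
      (diff_comp_inl (ht _)) (diff_comp_inr (((hgFis γ δ).differentiable (by simp)) _))]
    rw [pd_comp_inl_inr (h := t) (ht _) φ,
      pd_comp_inr_inr (h := fun z => gFinv z γ δ)
        (((hgFis γ δ).differentiable (by simp)) _) φ]
    ring
  rw [h1]
  have hz1 : ∑ a : Fin b, christoffel WM WI (Sum.inr γ) (Sum.inr φ) (Sum.inl a) x
      * XX x (Sum.inl a) (Sum.inr δ) = 0 :=
    Finset.sum_eq_zero (fun a _ => by rw [eXLR, mul_zero])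
  have hz2 : ∑ a : Fin b, christoffel WM WI (Sum.inr δ) (Sum.inr φ) (Sum.inl a) x
      * XX x (Sum.inr γ) (Sum.inl a) = 0 :=
    Finset.sum_eq_zero (fun a _ => by rw [eXRL, mul_zero])
  rw [hz1, hz2]
  have h2 : ∑ ε : Fin f, christoffel WM WI (Sum.inr γ) (Sum.inr φ) (Sum.inr ε) x
      * XX x (Sum.inr ε) (Sum.inr δ)
      = t (x ∘ Sum.inl)
          * ∑ ε, christoffel gF gFinv γ φ ε (x ∘ Sum.inr) * gFinv (x ∘ Sum.inr) ε δ := by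
    rw [Finset.mul_sum]
    apply Finset.sum_congr rfl
    intro ε _
    rw [chr_rrr hgF hρ x γ φ ε hρx, eXRR]
    ring
  have h3 : ∑ ε : Fin f, christoffel WM WI (Sum.inr δ) (Sum.inr φ) (Sum.inr ε) x
      * XX x (Sum.inr γ) (Sum.inr ε)
      = t (x ∘ Sum.inl)
          * ∑ ε, christoffel gF gFinv δ φ ε (x ∘ Sum.inr) * gFinv (x ∘ Sum.inr) γ ε := by
    rw [Finset.mul_sum]
    apply Finset.sum_congr rfl
    intro ε _
    rw [chr_rrr hgF hρ x δ φ ε hρx, eXRR]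
    ring
  rw [h2, h3]
  have := nabla_ginv hgF hgFsymm hgFinv φ γ δ (x ∘ Sum.inr)
  linear_combination (t (x ∘ Sum.inl)) * this

lemma pd_rho_inv (hρ : ContDiff ℝ (⊤ : ℕ∞) ρ) (hρpos : ∀ y, 0 < ρ y) (c : Fin b) (y : Fin b → ℝ) :
    pd c (fun w => ((ρ w)^2)⁻¹) y
      = -(((ρ y)^2)^2)⁻¹ * pd c (fun w => (ρ w)^2) y := by
  have hd : HasFDerivAt (fun w => (ρ w)^2) (fderiv ℝ (fun w => (ρ w)^2) y) y :=
    (((hρ.pow 2).differentiable (by simp)) y).hasFDerivAt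
  have hne : (ρ y)^2 ≠ 0 := pow_ne_zero 2 (hρpos y).ne'
  have houter : HasDerivAt (fun u : ℝ => u⁻¹) (-(((ρ y)^2) ^ 2)⁻¹) ((ρ y)^2) :=
    hasDerivAt_inv hne
  have hcomp := (houter.hasFDerivAt).comp y hd
  have e : (fun w => ((ρ w)^2)⁻¹) = (fun u : ℝ => u⁻¹) ∘ (fun w => (ρ w)^2) := rfl
  rw [pd, e, hcomp.fderiv]
  simp only [ContinuousLinearMap.coe_comp', Function.comp_apply,
    ContinuousLinearMap.smulRight_apply, ContinuousLinearMap.one_apply, smul_eq_mul,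
    ContinuousLinearMap.toSpanSingleton_apply]
  rw [pd]
  ring

-- covDup pattern lemmas
lemma cu_lll (hgB : ∀ i j, ContDiff ℝ (⊤ : ℕ∞) (fun y => gB y i j))
    (hK's : ∀ i j, ContDiff ℝ (⊤ : ℕ∞) (fun y => K' y i j)) (x : PtM b f) (a i j : Fin b) :
    covDup WM WI XX (Sum.inl a) (Sum.inl i) (Sum.inl j) x
      = covDup gB gBinv K' a i j (x ∘ Sum.inl) := by
  rw [covDup, covDup, Fintype.sum_sum_type]
  have hz : ∑ ε : Fin f, WI x (Sum.inl a) (Sum.inr ε)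
      * covD WM WI XX (Sum.inr ε) (Sum.inl i) (Sum.inl j) x = 0 :=
    Finset.sum_eq_zero (fun ε _ => by rw [wi_lr, zero_mul])
  rw [hz, add_zero]
  apply Finset.sum_congr rfl
  intro c _
  rw [wi_ll, cd_lll hgB hK's]

lemma cu_llr (hgB : ∀ i j, ContDiff ℝ (⊤ : ℕ∞) (fun y => gB y i j)) (x : PtM b f)
    (a i : Fin b) (γ : Fin f) :
    covDup WM WI XX (Sum.inl a) (Sum.inl i) (Sum.inr γ) x = 0 := by
  rw [covDup, Fintype.sum_sum_type]
  have hz : ∑ ε : Fin f, WI x (Sum.inl a) (Sum.inr ε)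
      * covD WM WI XX (Sum.inr ε) (Sum.inl i) (Sum.inr γ) x = 0 :=
    Finset.sum_eq_zero (fun ε _ => by rw [wi_lr, zero_mul])
  rw [hz, add_zero]
  exact Finset.sum_eq_zero (fun c _ => by rw [cd_llr hgB, mul_zero])

lemma cu_lrl (hgB : ∀ i j, ContDiff ℝ (⊤ : ℕ∞) (fun y => gB y i j)) (x : PtM b f)
    (a : Fin b) (γ : Fin f) (j : Fin b) :
    covDup WM WI XX (Sum.inl a) (Sum.inr γ) (Sum.inl j) x = 0 := by
  rw [covDup, Fintype.sum_sum_type]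
  have hz : ∑ ε : Fin f, WI x (Sum.inl a) (Sum.inr ε)
      * covD WM WI XX (Sum.inr ε) (Sum.inr γ) (Sum.inl j) x = 0 :=
    Finset.sum_eq_zero (fun ε _ => by rw [wi_lr, zero_mul])
  rw [hz, add_zero]
  exact Finset.sum_eq_zero (fun c _ => by rw [cd_lrl hgB, mul_zero])

lemma cu_rll (hgB : ∀ i j, ContDiff ℝ (⊤ : ℕ∞) (fun y => gB y i j))
    (hK's : ∀ i j, ContDiff ℝ (⊤ : ℕ∞) (fun y => K' y i j)) (x : PtM b f)
    (γ : Fin f) (i j : Fin b) :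
    covDup WM WI XX (Sum.inr γ) (Sum.inl i) (Sum.inl j) x = 0 := by
  rw [covDup, Fintype.sum_sum_type]
  have hz : ∑ c : Fin b, WI x (Sum.inr γ) (Sum.inl c)
      * covD WM WI XX (Sum.inl c) (Sum.inl i) (Sum.inl j) x = 0 :=
    Finset.sum_eq_zero (fun c _ => by rw [wi_rl, zero_mul])
  rw [hz, zero_add]
  exact Finset.sum_eq_zero (fun ε _ => by rw [cd_rll hgB hK's, mul_zero])

lemma cu_lrr (hgB : ∀ i j, ContDiff ℝ (⊤ : ℕ∞) (fun y => gB y i j))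
    (hgF : ∀ i j, ContDiff ℝ (⊤ : ℕ∞) (fun z => gF z i j))
    (hgFinv : ∀ z, gF z * gFinv z = 1)
    (hρ : ContDiff ℝ (⊤ : ℕ∞) ρ) (ht : ∀ y, DifferentiableAt ℝ t y)
    (x : PtM b f) (a : Fin b) (γ δ : Fin f) :
    covDup WM WI XX (Sum.inl a) (Sum.inr γ) (Sum.inr δ) x
      = (∑ c, gBinv (x ∘ Sum.inl) a c *
          (pd c t (x ∘ Sum.inl)
            + t (x ∘ Sum.inl) * ((ρ (x ∘ Sum.inl))^2)⁻¹
                * pd c (fun w => (ρ w)^2) (x ∘ Sum.inl)))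
        * gFinv (x ∘ Sum.inr) γ δ := by
  rw [covDup, Fintype.sum_sum_type]
  have hz : ∑ ε : Fin f, WI x (Sum.inl a) (Sum.inr ε)
      * covD WM WI XX (Sum.inr ε) (Sum.inr γ) (Sum.inr δ) x = 0 :=
    Finset.sum_eq_zero (fun ε _ => by rw [wi_lr, zero_mul])
  rw [hz, add_zero, Finset.sum_mul]
  apply Finset.sum_congr rfl
  intro c _
  rw [wi_ll, cd_lrr hgB hgF hgFinv hρ ht]
  ring

lemma cu_rlr (hgB : ∀ i j, ContDiff ℝ (⊤ : ℕ∞) (fun y => gB y i j))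
    (hgF : ∀ i j, ContDiff ℝ (⊤ : ℕ∞) (fun z => gF z i j))
    (hgFinv : ∀ z, gF z * gFinv z = 1)
    (hρ : ContDiff ℝ (⊤ : ℕ∞) ρ) (x : PtM b f) (γ : Fin f) (i : Fin b) (δ : Fin f) :
    covDup WM WI XX (Sum.inr γ) (Sum.inl i) (Sum.inr δ) x
      = ((ρ (x ∘ Sum.inl))^2)⁻¹ * gFinv (x ∘ Sum.inr) γ δ *
          ((1/2) * ((ρ (x ∘ Sum.inl))^2)⁻¹
              * (∑ a, pd a (fun w => (ρ w)^2) (x ∘ Sum.inl) * K' (x ∘ Sum.inl) i a)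
            - (1/2) * t (x ∘ Sum.inl)
              * (∑ c, gBinv (x ∘ Sum.inl) i c * pd c (fun w => (ρ w)^2) (x ∘ Sum.inl))) := by
  rw [covDup, Fintype.sum_sum_type]
  have hz : ∑ c : Fin b, WI x (Sum.inr γ) (Sum.inl c)
      * covD WM WI XX (Sum.inl c) (Sum.inl i) (Sum.inr δ) x = 0 :=
    Finset.sum_eq_zero (fun c _ => by rw [wi_rl, zero_mul])
  rw [hz, zero_add]
  rw [Finset.sum_congr rfl (fun ε _ => by rw [wi_rr, cd_rlr hgB hgF hgFinv hρ])]
  rw [Finset.sum_eq_single δ (fun ε _ hε => by rw [if_neg (Ne.symm hε)]; ring) (by simp)]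
  rw [if_pos rfl]
  ring

lemma cu_rrl (hgB : ∀ i j, ContDiff ℝ (⊤ : ℕ∞) (fun y => gB y i j))
    (hgF : ∀ i j, ContDiff ℝ (⊤ : ℕ∞) (fun z => gF z i j))
    (hgFsymm : ∀ z i j, gF z i j = gF z j i)
    (hgFinv : ∀ z, gF z * gFinv z = 1)
    (hρ : ContDiff ℝ (⊤ : ℕ∞) ρ) (x : PtM b f) (γ δ : Fin f) (i : Fin b) :
    covDup WM WI XX (Sum.inr γ) (Sum.inr δ) (Sum.inl i) x
      = ((ρ (x ∘ Sum.inl))^2)⁻¹ * gFinv (x ∘ Sum.inr) γ δ *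
          ((1/2) * ((ρ (x ∘ Sum.inl))^2)⁻¹
              * (∑ a, pd a (fun w => (ρ w)^2) (x ∘ Sum.inl) * K' (x ∘ Sum.inl) a i)
            - (1/2) * t (x ∘ Sum.inl)
              * (∑ c, gBinv (x ∘ Sum.inl) i c * pd c (fun w => (ρ w)^2) (x ∘ Sum.inl))) := by
  rw [covDup, Fintype.sum_sum_type]
  have hz : ∑ c : Fin b, WI x (Sum.inr γ) (Sum.inl c)
      * covD WM WI XX (Sum.inl c) (Sum.inr δ) (Sum.inl i) x = 0 :=
    Finset.sum_eq_zero (fun c _ => by rw [wi_rl, zero_mul])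
  rw [hz, zero_add]
  rw [Finset.sum_congr rfl (fun ε _ => by
    rw [wi_rr, cd_rrl hgB hgF hgFsymm hgFinv hρ])]
  rw [Finset.sum_eq_single δ (fun ε _ hε => by rw [if_neg (Ne.symm hε)]; ring) (by simp)]
  rw [if_pos rfl]
  ring

lemma cu_rrr (hgF : ∀ i j, ContDiff ℝ (⊤ : ℕ∞) (fun z => gF z i j))
    (hgFsymm : ∀ z i j, gF z i j = gF z j i)
    (hgFinv : ∀ z, gF z * gFinv z = 1)
    (hρ : ContDiff ℝ (⊤ : ℕ∞) ρ) (hρpos : ∀ y, 0 < ρ y)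
    (ht : ∀ y, DifferentiableAt ℝ t y)
    (x : PtM b f) (φ γ δ : Fin f) :
    covDup WM WI XX (Sum.inr φ) (Sum.inr γ) (Sum.inr δ) x = 0 := by
  rw [covDup, Fintype.sum_sum_type]
  have hz : ∑ c : Fin b, WI x (Sum.inr φ) (Sum.inl c)
      * covD WM WI XX (Sum.inl c) (Sum.inr γ) (Sum.inr δ) x = 0 :=
    Finset.sum_eq_zero (fun c _ => by rw [wi_rl, zero_mul])
  rw [hz, zero_add]
  exact Finset.sum_eq_zero (fun ε _ => by
    rw [cd_rrr hgF hgFsymm hgFinv hρ hρpos ht, mul_zero])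

/-- The key cancellation: the only nontrivial component of the Killing equation
for the extension, which holds because `dt = K' d(ρ⁻²)`. -/
lemma keyE (hgBdiag : ∀ y a a', a ≠ a' → gB y a a' = 0)
    (hgBinv : ∀ y, gB y * gBinv y = 1)
    (hK'diag : ∀ y a a', a ≠ a' → K' y a a' = 0)
    (hρ : ContDiff ℝ (⊤ : ℕ∞) ρ) (hρpos : ∀ y, 0 < ρ y)
    (htd : ∀ c y, pd c t y = K' y c c * gB y c c * pd c (fun w => ((ρ w)^2)⁻¹) y)
    (y : Fin b → ℝ) (a : Fin b) :
    (∑ c, gBinv y a c *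
        (pd c t y + t y * ((ρ y)^2)⁻¹ * pd c (fun w => (ρ w)^2) y))
      + 2 * (((ρ y)^2)⁻¹ *
          ((1/2) * ((ρ y)^2)⁻¹ * (∑ c, pd c (fun w => (ρ w)^2) y * K' y a c)
            - (1/2) * t y * (∑ c, gBinv y a c * pd c (fun w => (ρ w)^2) y))) = 0 := by
  have hgane := diag_entry_ne hgBinv hgBdiag y a
  have hrne : (ρ y)^2 ≠ 0 := pow_ne_zero 2 (hρpos y).ne'
  have e1 : ∑ c, gBinv y a c *
      (pd c t y + t y * ((ρ y)^2)⁻¹ * pd c (fun w => (ρ w)^2) y)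
      = gBinv y a a * (pd a t y + t y * ((ρ y)^2)⁻¹ * pd a (fun w => (ρ w)^2) y) := by
    rw [Finset.sum_eq_single a (fun c _ hc => by
      rw [ginv_diag hgBinv hgBdiag, if_neg (Ne.symm hc), zero_mul]) (by simp)]
  have e2 : ∑ c, pd c (fun w => (ρ w)^2) y * K' y a c
      = pd a (fun w => (ρ w)^2) y * K' y a a := by
    rw [Finset.sum_eq_single a (fun c _ hc => by
      rw [hK'diag y a c (Ne.symm hc), mul_zero]) (by simp)]
  have e3 : ∑ c, gBinv y a c * pd c (fun w => (ρ w)^2) y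
      = gBinv y a a * pd a (fun w => (ρ w)^2) y := by
    rw [Finset.sum_eq_single a (fun c _ hc => by
      rw [ginv_diag hgBinv hgBdiag, if_neg (Ne.symm hc), zero_mul]) (by simp)]
  rw [e1, e2, e3, htd a y, pd_rho_inv hρ hρpos a y,
    ginv_diag hgBinv hgBdiag y a a, if_pos rfl]
  have hρne : ρ y ≠ 0 := (hρpos y).ne'
  field_simp
  ring

lemma warp_killing (hgB : ∀ i j, ContDiff ℝ (⊤ : ℕ∞) (fun y => gB y i j))
    (hgBdiag : ∀ y a a', a ≠ a' → gB y a a' = 0)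
    (hgBinv : ∀ y, gB y * gBinv y = 1)
    (hgF : ∀ i j, ContDiff ℝ (⊤ : ℕ∞) (fun z => gF z i j))
    (hgFsymm : ∀ z i j, gF z i j = gF z j i)
    (hgFinv : ∀ z, gF z * gFinv z = 1)
    (hρ : ContDiff ℝ (⊤ : ℕ∞) ρ) (hρpos : ∀ y, 0 < ρ y)
    (hK's : ∀ i j, ContDiff ℝ (⊤ : ℕ∞) (fun y => K' y i j))
    (hK'diag : ∀ y a a', a ≠ a' → K' y a a' = 0)
    (hK'Killing : IsKillingC gB gBinv K')
    (ht : ∀ y, DifferentiableAt ℝ t y)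
    (htd : ∀ c y, pd c t y = K' y c c * gB y c c * pd c (fun w => ((ρ w)^2)⁻¹) y) :
    IsKillingC WM WI XX := by
  have hK'sym : ∀ y a c, K' y a c = K' y c a := by
    intro y a c
    by_cases h : a = c
    · rw [h]
    · rw [hK'diag y a c h, hK'diag y c a (Ne.symm h)]
  have hgFinvsym := ginv_symm hgFsymm hgFinv
  intro A I J x
  rcases A with a | α <;> rcases I with i | ι <;> rcases J with j | γ
  · rw [cu_lll hgB hK's, cu_lll hgB hK's, cu_lll hgB hK's]
    exact hK'Killing a i j (x ∘ Sum.inl)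
  · rw [cu_llr hgB, cu_lrl hgB, cu_rll hgB hK's]
    ring
  · rw [cu_lrl hgB, cu_rll hgB hK's, cu_llr hgB]
    ring
  · -- (inl a, inr ι, inr γ)
    rw [cu_lrr hgB hgF hgFinv hρ ht, cu_rrl hgB hgF hgFsymm hgFinv hρ,
      cu_rlr hgB hgF hgFinv hρ]
    rw [hgFinvsym (x ∘ Sum.inr) γ ι]
    have hswap : ∑ c, pd c (fun w => (ρ w)^2) (x ∘ Sum.inl) * K' (x ∘ Sum.inl) c a
        = ∑ c, pd c (fun w => (ρ w)^2) (x ∘ Sum.inl) * K' (x ∘ Sum.inl) a c :=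
      Finset.sum_congr rfl (fun c _ => by rw [hK'sym (x ∘ Sum.inl) c a])
    rw [hswap]
    have := keyE hgBdiag hgBinv hK'diag hρ hρpos htd (x ∘ Sum.inl) a
    linear_combination (gFinv (x ∘ Sum.inr) ι γ) * this
  · rw [cu_rll hgB hK's, cu_llr hgB, cu_lrl hgB]
    ring
  · -- (inr α, inl i, inr γ)
    rw [cu_rlr hgB hgF hgFinv hρ, cu_lrr hgB hgF hgFinv hρ ht,
      cu_rrl hgB hgF hgFsymm hgFinv hρ]
    rw [hgFinvsym (x ∘ Sum.inr) γ α]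
    have hswap : ∑ c, pd c (fun w => (ρ w)^2) (x ∘ Sum.inl) * K' (x ∘ Sum.inl) c i
        = ∑ c, pd c (fun w => (ρ w)^2) (x ∘ Sum.inl) * K' (x ∘ Sum.inl) i c :=
      Finset.sum_congr rfl (fun c _ => by rw [hK'sym (x ∘ Sum.inl) c i])
    rw [hswap]
    have := keyE hgBdiag hgBinv hK'diag hρ hρpos htd (x ∘ Sum.inl) i
    linear_combination (gFinv (x ∘ Sum.inr) α γ) * this
  · -- (inr α, inr ι, inl j)
    rw [cu_rrl hgB hgF hgFsymm hgFinv hρ, cu_rlr hgB hgF hgFinv hρ,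
      cu_lrr hgB hgF hgFinv hρ ht]
    rw [hgFinvsym (x ∘ Sum.inr) ι α]
    have hswap : ∑ c, pd c (fun w => (ρ w)^2) (x ∘ Sum.inl) * K' (x ∘ Sum.inl) c j
        = ∑ c, pd c (fun w => (ρ w)^2) (x ∘ Sum.inl) * K' (x ∘ Sum.inl) j c :=
      Finset.sum_congr rfl (fun c _ => by rw [hK'sym (x ∘ Sum.inl) c j])
    rw [hswap]
    have := keyE hgBdiag hgBinv hK'diag hρ hρpos htd (x ∘ Sum.inl) j
    linear_combination (gFinv (x ∘ Sum.inr) α ι) * this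
  · rw [cu_rrr hgF hgFsymm hgFinv hρ hρpos ht, cu_rrr hgF hgFsymm hgFinv hρ hρpos ht,
      cu_rrr hgF hgFsymm hgFinv hρ hρpos ht]
    ring
end CD

theorem KS_space_extends_into_warped_product
    (gB gBinv : (Fin b → ℝ) → Matrix (Fin b) (Fin b) ℝ)
    (gF gFinv : (Fin f → ℝ) → Matrix (Fin f) (Fin f) ℝ)
    (ρ : (Fin b → ℝ) → ℝ)
    (hgB : ∀ i j, ContDiff ℝ (⊤ : ℕ∞) (fun y => gB y i j))
    (hgBdiag : ∀ y a a', a ≠ a' → gB y a a' = 0)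
    (hgBinv : ∀ y, gB y * gBinv y = 1)
    (hgF : ∀ i j, ContDiff ℝ (⊤ : ℕ∞) (fun z => gF z i j))
    (hgFsymm : ∀ z i j, gF z i j = gF z j i)
    (hgFinv : ∀ z, gF z * gFinv z = 1)
    (hρ : ContDiff ℝ (⊤ : ℕ∞) ρ) (hρpos : ∀ y, 0 < ρ y)
    -- the Killing–Stäckel space `𝒦`: Killing tensors diagonalized in the web coordinates
    (𝒦 : Set ((Fin b → ℝ) → Matrix (Fin b) (Fin b) ℝ))
    (h𝒦smooth : ∀ K' ∈ 𝒦, ∀ i j, ContDiff ℝ (⊤ : ℕ∞) (fun y => K' y i j))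
    (h𝒦diag : ∀ K' ∈ 𝒦, ∀ y a a', a ≠ a' → K' y a a' = 0)
    (h𝒦Killing : ∀ K' ∈ 𝒦, IsKillingC gB gBinv K')
    -- `K ∈ 𝒦` is a characteristic Killing tensor: pointwise simple eigenvalues
    (K : (Fin b → ℝ) → Matrix (Fin b) (Fin b) ℝ) (hK𝒦 : K ∈ 𝒦)
    (hKchar : ∀ y a a', a ≠ a' → K y a a * gB y a a ≠ K y a' a' * gB y a' a')
    -- `K` satisfies `d(K d(ρ⁻²)) = 0`
    (hKclosed : ∀ a a' y,
      pd a (fun z => Kdkappa gB K (fun w => ((ρ w)^2)⁻¹) z a') y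
        = pd a' (fun z => Kdkappa gB K (fun w => ((ρ w)^2)⁻¹) z a) y) :
    -- then every `K' ∈ 𝒦` satisfies `d(K' d(ρ⁻²)) = 0` and extends to a Killing
    -- tensor `K' + t G₁` on the warped product `M = B ×_ρ F`
    ∀ K' ∈ 𝒦,
      (∀ a a' y,
        pd a (fun z => Kdkappa gB K' (fun w => ((ρ w)^2)⁻¹) z a') y
          = pd a' (fun z => Kdkappa gB K' (fun w => ((ρ w)^2)⁻¹) z a) y) ∧
      (∃ t : (Fin b → ℝ) → ℝ,
        (∀ a y, pd a t y = Kdkappa gB K' (fun w => ((ρ w)^2)⁻¹) y a) ∧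
        IsKillingC (warpMetric gB gF ρ) (warpMetricInv gBinv gFinv ρ)
          (fun x => liftB K' x + t (x ∘ Sum.inl) • liftG1 gFinv x)) := by
  intro K' hK'
  have hκ : ContDiff ℝ (⊤ : ℕ∞) (fun w => ((ρ w)^2)⁻¹) :=
    (hρ.pow 2).inv (fun w => pow_ne_zero 2 (hρpos w).ne')
  have hclosed' := part1 gB gBinv ρ hgB hgBdiag hgBinv hρ hρpos
    K (h𝒦smooth K hK𝒦) (h𝒦diag K hK𝒦) (h𝒦Killing K hK𝒦) hKchar hKclosed
    K' (h𝒦smooth K' hK') (h𝒦diag K' hK') (h𝒦Killing K' hK')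
  refine ⟨hclosed', ?_⟩
  have hθ : ∀ c, ContDiff ℝ (⊤ : ℕ∞)
      (fun y => Kdkappa gB K' (fun w => ((ρ w)^2)⁻¹) y c) := by
    intro c
    have e : (fun y => Kdkappa gB K' (fun w => ((ρ w)^2)⁻¹) y c)
        = fun y => K' y c c * gB y c c * pd c (fun w => ((ρ w)^2)⁻¹) y :=
      funext (fun y => Kdkappa_diag hgBdiag (h𝒦diag K' hK') _ y c)
    rw [e]
    exact ((h𝒦smooth K' hK' c c).mul (hgB c c)).mul (contDiff_pd hκ c)
  obtain ⟨t, htdiff, htval⟩ := poincare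
    (fun y a => Kdkappa gB K' (fun w => ((ρ w)^2)⁻¹) y a) hθ
    (fun a c y => hclosed' a c y)
  refine ⟨t, fun a y => htval a y, ?_⟩
  apply warp_killing hgB hgBdiag hgBinv hgF hgFsymm hgFinv hρ hρpos
    (h𝒦smooth K' hK') (h𝒦diag K' hK') (h𝒦Killing K' hK') htdiff
  intro c y
  rw [htval c y, Kdkappa_diag hgBdiag (h𝒦diag K' hK') _ y c]
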